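/- arXiv:1309.5693 — 9 statements merged into one kernel-verified Lean document; each statement's English description precedes it below -/
import Mathlib

section
/- For all x > 0, log Γ(x) < (x - 1/2) log x - x + log √(2π) + 1/(12x). -/
/-!
Let `μ(x) = log Γ(x) - ((x - 1/2) log x - x + log √(2π))` be the remainder in Stirling's formula.
By `Γ(x + 1) = x Γ(x)`, `μ(x) - μ(x + 1) = (x + 1/2) log (1 + 1/x) - 1`, and expanding the logarithm
in powers of `1/(2x + 1)` (Robbins' argument) bounds this strictly by `1/(12x) - 1/(12(x + 1))`.
Hence `μ(x) - 1/(12x)` increases strictly along `x, x + 1, x + 2, …`. Its limit there is at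
most `0`: log-convexity of `Γ` bounds `μ(m + t)` by `μ(m) + 1/(2m)` for `t ∈ [0, 1]`, and
`μ(m) → 0` along the integers by Stirling's formula for `n!`.
-/

open Real Filter Topology

theorem hasSum_add_half_mul_log_one_add_inv_sub_one {y : ℝ} (hy : 0 < y) :
    HasSum (fun k : ℕ => 1 / (2 * ((k + 1 : ℕ) : ℝ) + 1) * ((1 / (2 * y + 1)) ^ 2) ^ (k + 1))
      ((y + 1 / 2) * log (1 + y⁻¹) - 1) := by
  convert! (hasSum_nat_add_iff' 1).2 ((hasSum_log_one_add_inv hy).mul_left (y + 1 / 2)) using 1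
  · funext k
    rw [← pow_mul, pow_succ]
    field_simp
  · simp only [Finset.range_one, Finset.sum_singleton, Nat.cast_zero, mul_zero, zero_add, pow_one,
      sub_right_inj]
    field_simp

theorem add_half_mul_log_one_add_inv_sub_one_lt {y : ℝ} (hy : 0 < y) :
    (y + 1 / 2) * log (1 + y⁻¹) - 1 < 1 / (12 * y * (y + 1)) := by
  set r : ℝ := (1 / (2 * y + 1)) ^ 2 with hr
  have hr0 : 0 < r := by positivity
  have hr1 : r < 1 := by
    rw [hr, div_pow, one_pow, div_lt_one (by positivity)]
    nlinarith
  have hgeom : HasSum (fun k : ℕ => r ^ (k + 1) / 3) (1 / (12 * y * (y + 1))) := by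
    have h := ((hasSum_geometric_of_lt_one hr0.le hr1).mul_right r).div_const 3
    have e : (1 - r)⁻¹ * r / 3 = 1 / (12 * y * (y + 1)) := by
      have h1r : 1 - r = 4 * y * (y + 1) / (2 * y + 1) ^ 2 := by rw [hr]; field_simp; ring
      rw [h1r, hr]
      field_simp
      ring
    simpa only [e, ← pow_succ] using h
  refine hasSum_lt (i := 1) (fun k => ?_) ?_ (hasSum_add_half_mul_log_one_add_inv_sub_one hy) hgeom
  · rw [← hr, one_div_mul_eq_div]
    gcongr
    push_cast
    linarith [k.cast_nonneg (α := ℝ)]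
  · rw [← hr, one_div_mul_eq_div]
    gcongr
    norm_num

noncomputable def stirlingRemainder (x : ℝ) : ℝ :=
  log (Gamma x) - ((x - 1 / 2) * log x - x + log √(2 * π))

theorem stirlingRemainder_sub_stirlingRemainder_add_one {x : ℝ} (hx : 0 < x) :
    stirlingRemainder x - stirlingRemainder (x + 1) = (x + 1 / 2) * log (1 + x⁻¹) - 1 := by
  have hlog : log (1 + x⁻¹) = log (x + 1) - log x := by
    rw [← log_div (by positivity) hx.ne']
    congr 1
    field_simp
  rw [stirlingRemainder, stirlingRemainder, Gamma_add_one hx.ne',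
    log_mul hx.ne' (Gamma_pos_of_pos hx).ne', hlog]
  ring

theorem stirlingRemainder_natCast {n : ℕ} (hn : n ≠ 0) :
    stirlingRemainder n = log (Stirling.stirlingSeq n) - log √π := by
  obtain ⟨k, rfl⟩ := Nat.exists_eq_succ_of_ne_zero hn
  have hk : (0 : ℝ) < k + 1 := by positivity
  rw [stirlingRemainder, Nat.cast_succ, Gamma_nat_eq_factorial, Stirling.log_stirlingSeq_formula,
    Nat.factorial_succ]
  push_cast
  rw [log_mul hk.ne' (by positivity), log_sqrt (by positivity), log_sqrt pi_pos.le,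
    log_mul two_ne_zero pi_ne_zero, log_mul two_ne_zero hk.ne', log_div hk.ne' (exp_ne_zero 1),
    log_exp]
  ring

theorem tendsto_stirlingRemainder_natCast :
    Tendsto (fun n : ℕ => stirlingRemainder n) atTop (𝓝 0) := by
  have h := (Stirling.tendsto_stirlingSeq_sqrt_pi.log (by positivity)).sub_const (log √π)
  rw [sub_self] at h
  refine h.congr' ?_
  filter_upwards [eventually_ne_atTop 0] with n hn
  exact (stirlingRemainder_natCast hn).symm

theorem stirlingRemainder_add_le {m t : ℝ} (hm : 1 / 2 ≤ m) (ht₀ : 0 ≤ t) (ht₁ : t ≤ 1) :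
    stirlingRemainder (m + t) ≤ stirlingRemainder m + 1 / (2 * m) := by
  have hm₀ : 0 < m := by linarith
  have hconv : log (Gamma (m + t)) ≤ log (Gamma m) + t * log m := by
    have h := convexOn_log_Gamma.2 (Set.mem_Ioi.2 hm₀) (Set.mem_Ioi.2 (by linarith : 0 < m + 1))
      (sub_nonneg.2 ht₁) ht₀ (by ring)
    simp only [smul_eq_mul, Function.comp_apply, Gamma_add_one hm₀.ne',
      log_mul hm₀.ne' (Gamma_pos_of_pos hm₀).ne'] at h
    rw [show (1 - t) * m + t * (m + 1) = m + t by ring] at h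
    linarith
  have hlog : t / (m + t) ≤ log (m + t) - log m := by
    have h := one_sub_inv_le_log_of_pos (by positivity : 0 < (m + t) / m)
    rw [log_div (by positivity) hm₀.ne'] at h
    convert h using 1
    field_simp
    ring
  have hfin : t - (m + t - 1 / 2) * (t / (m + t)) ≤ 1 / (2 * m) := by
    have e : t - (m + t - 1 / 2) * (t / (m + t)) = t / (2 * (m + t)) := by field_simp; ring
    rw [e, div_le_div_iff₀ (by positivity) (by positivity)]
    nlinarith
  have := mul_le_mul_of_nonneg_left hlog (by linarith : 0 ≤ m + t - 1 / 2)
  rw [stirlingRemainder, stirlingRemainder]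
  linarith

theorem stirlingRemainder_sub_inv_lt {x : ℝ} (hx : 0 < x) :
    stirlingRemainder x - 1 / (12 * x) < stirlingRemainder (x + 1) - 1 / (12 * (x + 1)) := by
  have h := add_half_mul_log_one_add_inv_sub_one_lt hx
  rw [← stirlingRemainder_sub_stirlingRemainder_add_one hx,
    show 1 / (12 * x * (x + 1)) = 1 / (12 * x) - 1 / (12 * (x + 1)) by field_simp; ring] at h
  linarith

theorem stirlingRemainder_sub_inv_le_add_nat {x : ℝ} (hx : 0 < x) (n : ℕ) :
    stirlingRemainder x - 1 / (12 * x) ≤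
      stirlingRemainder (x + n) - 1 / (12 * (x + n)) := by
  induction n with
  | zero => simp
  | succ n ih =>
    have h := stirlingRemainder_sub_inv_lt (by positivity : 0 < x + n)
    push_cast
    rw [← add_assoc]
    linarith

theorem stirlingRemainder_le_floor {y : ℝ} (hy : 1 ≤ y) :
    stirlingRemainder y ≤ stirlingRemainder ⌊y⌋₊ + 1 / (2 * ⌊y⌋₊) := by
  have h := stirlingRemainder_add_le (m := ⌊y⌋₊) (t := y - ⌊y⌋₊)
    (by linarith [(Nat.one_le_cast (α := ℝ)).2 (Nat.le_floor (by simpa using hy))])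
    (sub_nonneg.2 (Nat.floor_le (by linarith))) (by linarith [Nat.lt_floor_add_one y])
  rwa [add_sub_cancel] at h

theorem stirlingRemainder_le_inv {x : ℝ} (hx : 0 < x) : stirlingRemainder x ≤ 1 / (12 * x) := by
  have hfloor : Tendsto (fun n : ℕ => ⌊x + n⌋₊) atTop atTop :=
    tendsto_nat_floor_atTop.comp (tendsto_atTop_add_const_left _ x tendsto_natCast_atTop_atTop)
  have hbound : Tendsto (fun n : ℕ => stirlingRemainder ⌊x + n⌋₊ + 1 / (2 * ⌊x + n⌋₊)) atTop
      (𝓝 0) := by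
    have h := tendsto_stirlingRemainder_natCast.add (tendsto_const_div_atTop_nhds_zero_nat (1 / 2))
    simp only [add_zero, div_div] at h
    exact h.comp hfloor
  refine sub_nonpos.1 (ge_of_tendsto hbound ?_)
  filter_upwards [eventually_ge_atTop 1] with n hn
  have hxn : 1 ≤ x + n := by linarith [(Nat.one_le_cast (α := ℝ)).2 hn]
  calc stirlingRemainder x - 1 / (12 * x)
      ≤ stirlingRemainder (x + n) - 1 / (12 * (x + n)) := stirlingRemainder_sub_inv_le_add_nat hx n
    _ ≤ stirlingRemainder (x + n) := sub_le_self _ (by positivity)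
    _ ≤ _ := stirlingRemainder_le_floor hxn

theorem log_gamma_upper (x : ℝ) (hx : 0 < x) :
    Real.log (Real.Gamma x) <
      (x - 1 / 2) * Real.log x - x + Real.log (Real.sqrt (2 * π)) + 1 / (12 * x) := by
  have h : stirlingRemainder x < 1 / (12 * x) := by
    have hstep := stirlingRemainder_sub_inv_lt hx
    have hnext := stirlingRemainder_le_inv (by linarith : 0 < x + 1)
    linarith
  rw [stirlingRemainder] at h
  linarith
end

section
/- For all x > 0, log Γ(x) > (x - 1/2) log x - x + log √(2π). -/
/-!
Let `μ(x) = log Γ(x) - (x - 1/2) log x + x - log √(2π)` be Binet's function. The functional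
equation of `Γ` gives `μ(x) - μ(x + 1) = (x + 1/2) log (1 + 1/x) - 1`, which is positive by
`log (1 + t) > 2t / (2 + t)`; so `μ` strictly decreases along `x, x + 1, x + 2, …`.
Log-convexity of `Γ` together with Stirling's lower bound for `m!` gives
`μ(x + m + 1) ≥ 1 + x - (m + x + 1/2) log (1 + (1 + x)/m)`, whose right side tends to `0`.
Hence `μ(x) > μ(x + 1) ≥ 0`.
-/

open Real Filter Topology
open scoped Nat

namespace Real

noncomputable def binet (x : ℝ) : ℝ :=
  log (Gamma x) - (x - 1 / 2) * log x + x - log (sqrt (2 * π))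

lemma binet_sub_binet_add_one {x : ℝ} (hx : 0 < x) :
    binet x - binet (x + 1) = (x + 1 / 2) * log (1 + 1 / x) - 1 := by
  have hlogΓ : log (Gamma (x + 1)) = log x + log (Gamma x) := by
    rw [Gamma_add_one hx.ne', log_mul hx.ne' (Gamma_pos_of_pos hx).ne']
  have hlog : log (1 + 1 / x) = log (x + 1) - log x := by
    rw [← log_div (by linarith) hx.ne']
    congr 1
    field_simp
  rw [binet, binet, hlogΓ, hlog]
  ring

lemma binet_add_one_lt {x : ℝ} (hx : 0 < x) : binet (x + 1) < binet x := by
  have hlog := lt_log_one_add_of_pos (one_div_pos.mpr hx)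
  have hone : (x + 1 / 2) * (2 * (1 / x) / (1 / x + 2)) = 1 := by
    field_simp
    ring
  have := mul_lt_mul_of_pos_left hlog (by linarith : 0 < x + 1 / 2)
  linarith [binet_sub_binet_add_one hx]

lemma binet_add_nat_le {x : ℝ} (hx : 0 < x) (n : ℕ) : binet (x + n) ≤ binet x := by
  induction n with
  | zero => simp
  | succ n ih =>
    push_cast
    rw [← add_assoc]
    exact (binet_add_one_lt (by positivity)).le.trans ih

lemma log_factorial_add_mul_log_le_log_Gamma {m : ℕ} (hm : m ≠ 0) {x : ℝ} (hx : 0 < x) :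
    log m ! + x * log m ≤ log (Gamma (m + 1 + x)) := by
  have hfeq : ∀ {y : ℝ}, 0 < y → (log ∘ Gamma) (y + 1) = (log ∘ Gamma) y + log y := by
    intro y hy
    simp only [Function.comp_apply]
    rw [Gamma_add_one hy.ne', log_mul hy.ne' (Gamma_pos_of_pos hy).ne', add_comm]
  have := BohrMollerup.f_add_nat_ge convexOn_log_Gamma hfeq (n := m + 1) (by omega) hx
  simpa [Gamma_nat_eq_factorial] using this

lemma one_add_sub_mul_log_le_binet {m : ℕ} (hm : m ≠ 0) {x : ℝ} (hx : 0 < x) :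
    1 + x - (m + x + 1 / 2) * log (1 + (1 + x) / m) ≤ binet (x + (m + 1 : ℕ)) := by
  have hm0 : (0 : ℝ) < m := by positivity
  have hlog : log (1 + (1 + x) / m) = log (m + 1 + x) - log m := by
    rw [← log_div (by positivity) hm0.ne']
    congr 1
    field_simp
    ring
  have hΓ := log_factorial_add_mul_log_le_log_Gamma hm hx
  have hstirling := Stirling.le_log_factorial_stirling hm
  rw [hlog, binet, log_sqrt (by positivity)]
  push_cast
  rw [show x + (m + 1) = (m : ℝ) + 1 + x by ring]
  linarith

lemma tendsto_nat_add_mul_log_one_add_div (a c : ℝ) :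
    Tendsto (fun n : ℕ => (n + c) * log (1 + a / n)) atTop (𝓝 a) := by
  have hratio : Tendsto (fun y : ℝ => 1 + c / y) atTop (𝓝 1) := by
    simpa using (tendsto_const_nhds (x := (1 : ℝ))).add (tendsto_const_nhds.div_atTop tendsto_id)
  have hreal : Tendsto (fun y : ℝ => (y + c) * log (1 + a / y)) atTop (𝓝 a) := by
    refine (one_mul a ▸ hratio.mul (tendsto_mul_log_one_add_div_atTop a)).congr' ?_
    filter_upwards [eventually_gt_atTop 0] with y hy
    field_simp
  exact hreal.comp tendsto_natCast_atTop_atTop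

lemma binet_nonneg {x : ℝ} (hx : 0 < x) : 0 ≤ binet x := by
  have hlim : Tendsto (fun m : ℕ => 1 + x - (m + (x + 1 / 2)) * log (1 + (1 + x) / m))
      atTop (𝓝 0) := by
    simpa using (tendsto_nat_add_mul_log_one_add_div (1 + x) (x + 1 / 2)).const_sub (1 + x)
  refine le_of_tendsto hlim ?_
  filter_upwards [eventually_ne_atTop 0] with m hm
  rw [← add_assoc]
  exact (one_add_sub_mul_log_le_binet hm hx).trans (binet_add_nat_le hx _)

end Real

theorem log_gamma_lower (x : ℝ) (hx : 0 < x) :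
    Real.log (Real.Gamma x) >
      (x - 1 / 2) * Real.log x - x + Real.log (Real.sqrt (2 * π)) := by
  have h := (binet_nonneg (x := x + 1) (by linarith)).trans_lt (binet_add_one_lt hx)
  rw [binet] at h
  linarith
end

section
/- For all x > 0, the digamma function satisfies (log Γ(x))' > log x - 1/(2x) - 1/(12x²). -/
/-!
Let `A x = log x - 1/(2x) - 1/(12x²)` and `f = ψ - A`. By `ψ (x + 1) = ψ x + 1/x`,
`f x - f (x + 1) = d x := A (x + 1) - A x - 1/x`, and `d' x = -1/(6x³(x+1)³) < 0`.
Both `d` and `f` are bounded below by `-1/x`: `d` since `log (1 + 1/x) ≥ 1/(x + 1)`, and `f` since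
the slope `log x` of the convex function `log ∘ Γ` on `[x, x + 1]` is at most `ψ (x + 1)`.
A function that does not increase under `x ↦ x + 1` and is bounded below by something tending
to `0` is nonnegative. Applied to the strictly decreasing `d` this gives `d > 0`; applied to `f`
it gives `f (x + 1) ≥ 0`, hence `f x = d x + f (x + 1) > 0`.
-/

open Real Set Filter Topology

local notation "ψ" => deriv fun y => Real.log (Real.Gamma y)

theorem nonneg_of_map_add_one_le_of_tendsto {f g : ℝ → ℝ} {a : ℝ}
    (hstep : ∀ y > a, f (y + 1) ≤ f y) (hg : Tendsto g atTop (𝓝 0))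
    (hgf : ∀ y > a, g y ≤ f y) {x : ℝ} (hx : a < x) : 0 ≤ f x := by
  have hxn (n : ℕ) : a < x + n := by linarith [n.cast_nonneg (α := ℝ)]
  have hanti : Antitone fun n : ℕ => f (x + n) :=
    antitone_nat_of_succ_le fun n => by simpa [add_assoc] using hstep (x + n) (hxn n)
  have hlim : Tendsto (fun n : ℕ => g (x + n)) atTop (𝓝 0) :=
    hg.comp (tendsto_atTop_add_const_left _ x tendsto_natCast_atTop_atTop)
  refine le_of_tendsto' hlim fun n => ?_
  calc g (x + n) ≤ f (x + n) := hgf _ (hxn n)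
    _ ≤ f (x + (0 : ℕ)) := hanti n.zero_le
    _ = f x := by simp

theorem tendsto_neg_inv_atTop_zero : Tendsto (fun y : ℝ => -y⁻¹) atTop (𝓝 0) := by
  simpa using (tendsto_inv_atTop_zero (𝕜 := ℝ)).neg

section LogGamma

variable {x : ℝ}

theorem differentiableAt_log_Gamma (hx : 0 < x) :
    DifferentiableAt ℝ (fun y => log (Gamma y)) x := by
  refine (differentiableAt_Gamma fun m hm => ?_).log (Gamma_pos_of_pos hx).ne'
  linarith [m.cast_nonneg (α := ℝ)]

theorem log_Gamma_add_one (hx : 0 < x) : log (Gamma (x + 1)) = log x + log (Gamma x) := by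
  rw [Gamma_add_one hx.ne', log_mul hx.ne' (Gamma_pos_of_pos hx).ne']

theorem deriv_log_Gamma_add_one (hx : 0 < x) : ψ (x + 1) = ψ x + x⁻¹ := by
  have heq : (fun y => log (Gamma (y + 1))) =ᶠ[𝓝 x] fun y => log y + log (Gamma y) := by
    filter_upwards [eventually_gt_nhds hx] with y hy using log_Gamma_add_one hy
  have hd := heq.deriv_eq
  rw [deriv_comp_add_const (fun y => log (Gamma y)) 1] at hd
  rw [hd, deriv_fun_add (differentiableAt_log hx.ne') (differentiableAt_log_Gamma hx), deriv_log,
    add_comm]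

theorem log_sub_inv_le_deriv_log_Gamma (hx : 0 < x) : log x - x⁻¹ ≤ ψ x := by
  have hx1 : 0 < x + 1 := by linarith
  have hslope := convexOn_log_Gamma.slope_le_deriv (mem_Ioi.2 hx) (mem_Ioi.2 hx1) (by linarith)
    (differentiableAt_log_Gamma hx1)
  rw [slope_def_field] at hslope
  simp only [Function.comp_def, log_Gamma_add_one hx, deriv_log_Gamma_add_one hx] at hslope
  have hlog : (log x + log (Gamma x) - log (Gamma x)) / (x + 1 - x) = log x := by ring
  linarith

end LogGamma

noncomputable def digammaApprox (x : ℝ) : ℝ :=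
  log x - 1 / (2 * x) - 1 / (12 * x ^ 2)

noncomputable def digammaApproxDefect (x : ℝ) : ℝ :=
  digammaApprox (x + 1) - digammaApprox x - x⁻¹

section Approx

variable {x : ℝ}

theorem hasDerivAt_digammaApprox (hx : x ≠ 0) :
    HasDerivAt digammaApprox (x⁻¹ + 1 / (2 * x ^ 2) + 1 / (6 * x ^ 3)) x := by
  have h1 := (hasDerivAt_const x (1 : ℝ)).fun_div ((hasDerivAt_id' x).const_mul 2) (by simpa)
  have h2 := (hasDerivAt_const x (1 : ℝ)).fun_div ((hasDerivAt_pow 2 x).const_mul 12) (by simpa)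
  exact (((hasDerivAt_log hx).fun_sub h1).fun_sub h2).congr_deriv (by field_simp; ring)

theorem hasDerivAt_digammaApproxDefect (hx : 0 < x) :
    HasDerivAt digammaApproxDefect (-(1 / (6 * x ^ 3 * (x + 1) ^ 3))) x := by
  have hx1 : x + 1 ≠ 0 := by linarith
  have hshift := (hasDerivAt_digammaApprox hx1).comp_add_const x 1
  have hdiff := (hshift.fun_sub (hasDerivAt_digammaApprox hx.ne')).fun_sub (hasDerivAt_inv hx.ne')
  exact hdiff.congr_deriv (by field_simp; ring)

theorem strictAntiOn_digammaApproxDefect : StrictAntiOn digammaApproxDefect (Ioi 0) := by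
  refine strictAntiOn_of_hasDerivWithinAt_neg (convex_Ioi 0)
    (fun x hx => (hasDerivAt_digammaApproxDefect hx).continuousAt.continuousWithinAt)
    (fun x hx => (hasDerivAt_digammaApproxDefect (interior_subset hx)).hasDerivWithinAt)
    fun x hx => ?_
  have hx : 0 < x := interior_subset hx
  simp only [neg_lt_zero]
  positivity

theorem neg_inv_le_digammaApproxDefect (hx : 0 < x) : -x⁻¹ ≤ digammaApproxDefect x := by
  have hx1 : 0 < x + 1 := by linarith
  have hlog : 1 / (x + 1) ≤ log (x + 1) - log x := by
    have h := log_le_sub_one_of_pos (show 0 < x / (x + 1) by positivity)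
    rw [log_div hx.ne' hx1.ne'] at h
    have hsub : x / (x + 1) - 1 = -(1 / (x + 1)) := by field_simp; ring
    linarith
  have hsplit : digammaApproxDefect x + x⁻¹ = (log (x + 1) - log x - 1 / (x + 1)) +
      (6 * x * (x + 1) ^ 2 + 6 * x ^ 2 * (x + 1) + 2 * x + 1) / (12 * x ^ 2 * (x + 1) ^ 2) := by
    unfold digammaApproxDefect digammaApprox
    field_simp
    ring
  have hrat : 0 ≤ (6 * x * (x + 1) ^ 2 + 6 * x ^ 2 * (x + 1) + 2 * x + 1) /
      (12 * x ^ 2 * (x + 1) ^ 2) := by positivity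
  linarith

theorem digammaApproxDefect_lt_self (hx : 0 < x) :
    digammaApproxDefect (x + 1) < digammaApproxDefect x :=
  strictAntiOn_digammaApproxDefect (mem_Ioi.2 hx) (mem_Ioi.2 (by linarith)) (lt_add_one x)

theorem digammaApproxDefect_pos (hx : 0 < x) : 0 < digammaApproxDefect x := by
  have hnonneg : 0 ≤ digammaApproxDefect (x + 1) :=
    nonneg_of_map_add_one_le_of_tendsto (fun y hy => (digammaApproxDefect_lt_self hy).le)
      tendsto_neg_inv_atTop_zero (fun y hy => neg_inv_le_digammaApproxDefect hy) (by linarith)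
  linarith [digammaApproxDefect_lt_self hx]

end Approx

theorem digamma_lower (x : ℝ) (hx : 0 < x) :
    deriv (fun y => Real.log (Real.Gamma y)) x >
      Real.log x - 1 / (2 * x) - 1 / (12 * x ^ 2) := by
  have hstep : ∀ y > 0,
      ψ y - digammaApprox y = digammaApproxDefect y + (ψ (y + 1) - digammaApprox (y + 1)) := by
    intro y hy
    rw [deriv_log_Gamma_add_one hy, digammaApproxDefect]
    ring
  have hlower : ∀ y > 0, -y⁻¹ ≤ ψ y - digammaApprox y := by
    intro y hy
    have hcorr : 0 < 1 / (2 * y) + 1 / (12 * y ^ 2) := by positivity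
    unfold digammaApprox
    linarith [log_sub_inv_le_deriv_log_Gamma hy]
  have hremainder : 0 ≤ ψ (x + 1) - digammaApprox (x + 1) :=
    nonneg_of_map_add_one_le_of_tendsto
      (fun y hy => by linarith [hstep y hy, digammaApproxDefect_pos hy])
      tendsto_neg_inv_atTop_zero hlower (by linarith)
  show digammaApprox x < ψ x
  linarith [hstep x hx, digammaApproxDefect_pos hx]
end

section
/- For all x > 0, the trigamma function satisfies 1/x + 1/(2x²) < (log Γ(x))'' < 1/x + 1/(2x²) + 1/(6x³). -/
/-!
Differentiating Euler's limit `log Γ(x) = lim (x log n + log n! - ∑_{m ≤ n} log (x + m))`, whose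
derivatives converge uniformly on bounded intervals, gives the digamma series
`ψ(x) = -γ - ∑_{m ≥ 0} (1/(x + m) - 1/(m + 1))`, and differentiating that termwise gives
`(log Γ)''(x) = ∑_{m ≥ 0} 1 / (x + m)²`.
For `L(t) = 1/t + 1/(2t²)` and `U(t) = L(t) + 1/(6t³)` one computes
`L(t) - L(t+1) = 1/t² - 1/(2t²(t+1)²)` and `U(t) - U(t+1) = 1/t² + 1/(6t³(t+1)³)`, so
`L(t) - L(t+1) < 1/t² < U(t) - U(t+1)`; summing over `t = x + m` telescopes to `L(x)` and `U(x)`,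
since both vanish at infinity.
-/

open Real Filter Set Topology

theorem hasSum_sub_add_one_of_tendsto {f : ℝ → ℝ} {x : ℝ} (hf : Tendsto f atTop (𝓝 0))
    (hanti : ∀ t, x ≤ t → f (t + 1) ≤ f t) :
    HasSum (fun m : ℕ => f (x + m) - f (x + m + 1)) (f x) := by
  have hxm : ∀ m : ℕ, x ≤ x + m := fun m => le_add_of_nonneg_right m.cast_nonneg
  rw [hasSum_iff_tendsto_nat_of_nonneg fun m => sub_nonneg.2 (hanti _ (hxm m))]
  have hsum (n : ℕ) : ∑ m ∈ Finset.range n, (f (x + m) - f (x + m + 1)) = f x - f (x + n) := by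
    simpa [add_assoc] using Finset.sum_range_sub' (fun m : ℕ => f (x + m)) n
  simp_rw [hsum]
  simpa using tendsto_const_nhds.sub
    (hf.comp (tendsto_atTop_add_const_left _ x tendsto_natCast_atTop_atTop))

theorem lt_tsum_lt_of_sub_add_one {f g h : ℝ → ℝ} {x : ℝ} (hf : Tendsto f atTop (𝓝 0))
    (hh : Tendsto h atTop (𝓝 0)) (hf_anti : ∀ t, x ≤ t → f (t + 1) ≤ f t)
    (hfg : ∀ t, x ≤ t → f t - f (t + 1) < g t) (hgh : ∀ t, x ≤ t → g t < h t - h (t + 1)) :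
    f x < ∑' m : ℕ, g (x + m) ∧ ∑' m : ℕ, g (x + m) < h x := by
  have hxm : ∀ m : ℕ, x ≤ x + m := fun m => le_add_of_nonneg_right m.cast_nonneg
  have hf_sum := hasSum_sub_add_one_of_tendsto hf hf_anti
  have hh_sum := hasSum_sub_add_one_of_tendsto hh fun t ht =>
    sub_nonneg.1 ((sub_nonneg.2 (hf_anti t ht)).trans ((hfg t ht).trans (hgh t ht)).le)
  have hg : Summable fun m : ℕ => g (x + m) :=
    .of_nonneg_of_le (fun m => (sub_nonneg.2 (hf_anti _ (hxm m))).trans (hfg _ (hxm m)).le)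
      (fun m => (hgh _ (hxm m)).le) hh_sum.summable
  exact ⟨hasSum_lt (i := 0) (fun m => (hfg _ (hxm m)).le) (by simpa using hfg x le_rfl) hf_sum
    hg.hasSum, hasSum_lt (i := 0) (fun m => (hgh _ (hxm m)).le) (by simpa using hgh x le_rfl)
    hg.hasSum hh_sum⟩

namespace Real

theorem hasDerivAt_logGammaSeq {y : ℝ} (hy : 0 < y) (n : ℕ) :
    HasDerivAt (fun z => BohrMollerup.logGammaSeq z n)
      (log n - ∑ m ∈ Finset.range (n + 1), (y + m)⁻¹) y := by
  have hlog : HasDerivAt (fun z => ∑ m ∈ Finset.range (n + 1), log (z + m))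
      (∑ m ∈ Finset.range (n + 1), (y + m)⁻¹) y :=
    .fun_sum fun m _ => by
      simpa using ((hasDerivAt_id y).add_const (m : ℝ)).log (by positivity)
  simpa [BohrMollerup.logGammaSeq] using
    ((hasDerivAt_mul_const (log n)).add_const (log (n.factorial))).fun_sub hlog

theorem tendsto_log_sub_harmonic_succ :
    Tendsto (fun n : ℕ => log n - harmonic (n + 1)) atTop (𝓝 (-eulerMascheroniConstant)) := by
  have h := (tendsto_harmonic_sub_log.add tendsto_one_div_add_atTop_nhds_zero_nat).neg
  rw [add_zero] at h
  refine h.congr fun n => ?_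
  rw [harmonic_succ]
  push_cast
  ring

theorem tendstoUniformlyOn_sum_range_inv_add_sub_inv (b : ℝ) :
    TendstoUniformlyOn
      (fun n (y : ℝ) => ∑ m ∈ Finset.range (n + 1), ((y + m)⁻¹ - ((m : ℝ) + 1)⁻¹))
      (fun y => ∑' m : ℕ, ((y + m)⁻¹ - ((m : ℝ) + 1)⁻¹)) atTop (Ioo 0 b) := by
  suffices h : TendstoUniformlyOn
      (fun n (y : ℝ) => ∑ m ∈ Finset.range n, ((y + m)⁻¹ - ((m : ℝ) + 1)⁻¹))
      (fun y => ∑' m : ℕ, ((y + m)⁻¹ - ((m : ℝ) + 1)⁻¹)) atTop (Ioo 0 b) from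
    fun u hu => (tendsto_add_atTop_nat 1).eventually (h u hu)
  refine tendstoUniformlyOn_tsum_nat_eventually (u := fun m : ℕ => (1 + b) * (1 / (m : ℝ) ^ 2))
    ((summable_one_div_nat_pow.2 one_lt_two).mul_left _) ?_
  filter_upwards [eventually_ge_atTop 1] with m hm y hy
  have hm : (1 : ℝ) ≤ m := by exact_mod_cast hm
  obtain ⟨hy0, hyb⟩ := hy
  have hdiff : (y + m)⁻¹ - ((m : ℝ) + 1)⁻¹ = (1 - y) / ((y + m) * (m + 1)) := by
    field_simp
    ring
  have hden : 0 < (y + m) * (m + 1) := mul_pos (by linarith) (by positivity)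
  rw [hdiff, norm_div, Real.norm_eq_abs, Real.norm_eq_abs, abs_of_pos hden, mul_one_div, sq]
  refine div_le_div₀ (by linarith) ?_ (by positivity) (by gcongr <;> linarith)
  rw [abs_le]
  constructor <;> linarith

noncomputable def digammaSeries (y : ℝ) : ℝ :=
  -eulerMascheroniConstant - ∑' m : ℕ, ((y + m)⁻¹ - ((m : ℝ) + 1)⁻¹)

theorem hasDerivAt_log_Gamma {y : ℝ} (hy : 0 < y) :
    HasDerivAt (fun z => log (Gamma z)) (digammaSeries y) y := by
  refine hasDerivAt_of_tendstoUniformlyOn (g' := digammaSeries) isOpen_Ioo ?_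
    (.of_forall fun n z hz => hasDerivAt_logGammaSeq hz.1 n)
    (fun z hz => BohrMollerup.tendsto_log_gamma hz.1) (⟨hy, lt_add_one y⟩ : y ∈ Ioo 0 (y + 1))
  refine ((tendsto_log_sub_harmonic_succ.tendstoUniformlyOn_const _).sub
    (tendstoUniformlyOn_sum_range_inv_add_sub_inv _)).congr (.of_forall fun n z _ => ?_)
  simp only [Pi.sub_apply, harmonic, Finset.sum_sub_distrib]
  push_cast
  ring

theorem summable_inv_add_sq {a : ℝ} (ha : 0 < a) : Summable fun m : ℕ => ((a + m) ^ 2)⁻¹ := by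
  refine ((summable_one_div_nat_add_rpow a 2).2 one_lt_two).congr fun m => ?_
  rw [abs_of_pos (by positivity), rpow_two, one_div, add_comm]

theorem hasDerivAt_tsum_inv_add_sub_inv {y : ℝ} (hy : 0 < y) :
    HasDerivAt (fun z : ℝ => ∑' m : ℕ, ((z + m)⁻¹ - ((m : ℝ) + 1)⁻¹))
      (∑' m : ℕ, -((y + m) ^ 2)⁻¹) y := by
  have ha : 0 < min y 1 / 2 := by positivity
  have hya : min y 1 / 2 < y := by linarith [min_le_left y 1]
  have h1a : min y 1 / 2 < 1 := by linarith [min_le_right y 1]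
  refine hasDerivAt_tsum_of_isPreconnected (t := Ioi (min y 1 / 2)) (y₀ := 1)
    (g := fun (m : ℕ) (z : ℝ) => (z + m)⁻¹ - ((m : ℝ) + 1)⁻¹)
    (g' := fun (m : ℕ) (z : ℝ) => -((z + m) ^ 2)⁻¹)
    (summable_inv_add_sq ha) isOpen_Ioi isPreconnected_Ioi (fun m z hz => ?_) (fun m z hz => ?_)
    h1a ?_ hya
  · have hz0 : z + m ≠ 0 := by linarith [mem_Ioi.1 hz, (Nat.cast_nonneg m : (0 : ℝ) ≤ m)]
    simpa [neg_div] using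
      (((hasDerivAt_id z).add_const (m : ℝ)).fun_inv hz0).sub_const ((m : ℝ) + 1)⁻¹
  · have hz : min y 1 / 2 + m ≤ z + m := by linarith [mem_Ioi.1 hz]
    rw [norm_neg, norm_inv, norm_pow, Real.norm_eq_abs, abs_of_pos (by linarith)]
    gcongr
  · simp only [add_comm (1 : ℝ), sub_self]
    exact summable_zero

theorem hasDerivAt_digammaSeries {y : ℝ} (hy : 0 < y) :
    HasDerivAt digammaSeries (∑' m : ℕ, ((y + m) ^ 2)⁻¹) y := by
  unfold digammaSeries
  simpa [tsum_neg] using (hasDerivAt_tsum_inv_add_sub_inv hy).const_sub (-eulerMascheroniConstant)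

theorem iteratedDeriv_two_log_Gamma {x : ℝ} (hx : 0 < x) :
    iteratedDeriv 2 (fun y => log (Gamma y)) x = ∑' m : ℕ, ((x + m) ^ 2)⁻¹ := by
  have hderiv : deriv (fun y => log (Gamma y)) =ᶠ[𝓝 x] digammaSeries := by
    filter_upwards [Ioi_mem_nhds hx] with y hy using (hasDerivAt_log_Gamma hy).deriv
  rw [iteratedDeriv_succ, iteratedDeriv_one, hderiv.deriv_eq, (hasDerivAt_digammaSeries hx).deriv]

noncomputable def trigammaLower (t : ℝ) : ℝ := 1 / t + 1 / (2 * t ^ 2)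

noncomputable def trigammaUpper (t : ℝ) : ℝ := trigammaLower t + 1 / (6 * t ^ 3)

theorem tendsto_trigammaLower : Tendsto trigammaLower atTop (𝓝 0) := by
  rw [← add_zero (0 : ℝ)]
  exact (tendsto_const_nhds.div_atTop tendsto_id).add (tendsto_const_nhds.div_atTop
    ((tendsto_pow_atTop two_ne_zero).const_mul_atTop (two_pos : (0 : ℝ) < 2)))

theorem tendsto_trigammaUpper : Tendsto trigammaUpper atTop (𝓝 0) := by
  rw [← add_zero (0 : ℝ)]
  exact tendsto_trigammaLower.add (tendsto_const_nhds.div_atTop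
    ((tendsto_pow_atTop three_ne_zero).const_mul_atTop (by norm_num : (0 : ℝ) < 6)))

theorem trigammaLower_add_one_le {t : ℝ} (ht : 0 < t) :
    trigammaLower (t + 1) ≤ trigammaLower t := by
  unfold trigammaLower
  gcongr <;> linarith

theorem trigammaLower_sub_add_one_lt {t : ℝ} (ht : 0 < t) :
    trigammaLower t - trigammaLower (t + 1) < (t ^ 2)⁻¹ := by
  have h : trigammaLower t - trigammaLower (t + 1) = (t ^ 2)⁻¹ - (2 * t ^ 2 * (t + 1) ^ 2)⁻¹ := by
    unfold trigammaLower
    field_simp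
    ring
  have : 0 < (2 * t ^ 2 * (t + 1) ^ 2)⁻¹ := by positivity
  linarith

theorem lt_trigammaUpper_sub_add_one {t : ℝ} (ht : 0 < t) :
    (t ^ 2)⁻¹ < trigammaUpper t - trigammaUpper (t + 1) := by
  have h : trigammaUpper t - trigammaUpper (t + 1) = (t ^ 2)⁻¹ + (6 * t ^ 3 * (t + 1) ^ 3)⁻¹ := by
    unfold trigammaUpper trigammaLower
    field_simp
    ring
  have : 0 < (6 * t ^ 3 * (t + 1) ^ 3)⁻¹ := by positivity
  linarith

theorem trigammaLower_lt_tsum_lt_trigammaUpper {x : ℝ} (hx : 0 < x) :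
    trigammaLower x < ∑' m : ℕ, ((x + m) ^ 2)⁻¹ ∧ ∑' m : ℕ, ((x + m) ^ 2)⁻¹ < trigammaUpper x :=
  lt_tsum_lt_of_sub_add_one (g := fun t => (t ^ 2)⁻¹) tendsto_trigammaLower tendsto_trigammaUpper
    (fun _ ht => trigammaLower_add_one_le (hx.trans_le ht))
    (fun _ ht => trigammaLower_sub_add_one_lt (hx.trans_le ht))
    (fun _ ht => lt_trigammaUpper_sub_add_one (hx.trans_le ht))

end Real

theorem trigamma_bounds (x : ℝ) (hx : 0 < x) :
    1 / x + 1 / (2 * x ^ 2) < iteratedDeriv 2 (fun y => Real.log (Real.Gamma y)) x ∧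
    iteratedDeriv 2 (fun y => Real.log (Real.Gamma y)) x
      < 1 / x + 1 / (2 * x ^ 2) + 1 / (6 * x ^ 3) := by
  rw [Real.iteratedDeriv_two_log_Gamma hx]
  exact Real.trigammaLower_lt_tsum_lt_trigammaUpper hx
end

section
/- The sequence {(4^n - 1)^{1/n}}_{n≥1} is log-concave, i.e., ((4^n - 1)^{1/n})² ≥ (4^{n-1} - 1)^{1/(n-1)} · (4^{n+1} - 1)^{1/(n+1)} for all n ≥ 2. -/
/-!
Put `L k = log (x ^ k - 1)` for any `x > 1` (here `x = 4`). The sequence `L` is concave, since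
`(x ^ (m + 1) - 1) ^ 2 - (x ^ m - 1) * (x ^ (m + 2) - 1) = x ^ m * (x - 1) ^ 2`.
Concavity of `L` passes to `L k / k` at `m + 1` as soon as `L m / m ≤ L (m + 2) / (m + 2)`,
and this follows from `x ^ 2 * (x ^ m - 1) ≤ x ^ (m + 2) - 1 ≤ x ^ (m + 2)`.
-/

open Real

lemma div_add_div_le_two_mul_div_of_concave {m A B C : ℝ} (hm : 0 < m)
    (hconc : A + C ≤ 2 * B) (hmono : (m + 2) * A ≤ m * C) :
    A / m + C / (m + 2) ≤ 2 * (B / (m + 1)) := by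
  rw [div_add_div _ _ hm.ne' (by positivity), mul_div_assoc', div_le_div_iff₀ (by positivity)
    (by positivity)]
  linear_combination (m * (m + 2)) * hconc + hmono

lemma pow_sub_one_mul_pow_add_two_sub_one_le_sq {x : ℝ} (hx : 0 ≤ x) (m : ℕ) :
    (x ^ m - 1) * (x ^ (m + 2) - 1) ≤ (x ^ (m + 1) - 1) ^ 2 := by
  have h : (x ^ (m + 1) - 1) ^ 2 - (x ^ m - 1) * (x ^ (m + 2) - 1) = x ^ m * (x - 1) ^ 2 := by
    ring
  exact sub_nonneg.1 (h ▸ by positivity)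

section LogPowSubOne

variable {x : ℝ} (hx : 1 < x) {m : ℕ} (hm : m ≠ 0)
include hx hm

lemma pow_sub_one_pos : 0 < x ^ m - 1 := sub_pos.2 (one_lt_pow₀ hx hm)

lemma log_pow_sub_one_add_log_pow_add_two_sub_one_le :
    log (x ^ m - 1) + log (x ^ (m + 2) - 1) ≤ 2 * log (x ^ (m + 1) - 1) := by
  have hpos := pow_sub_one_pos hx hm
  have hpos₂ : 0 < x ^ (m + 2) - 1 := pow_sub_one_pos hx (by omega)
  have := log_le_log (mul_pos hpos hpos₂)
    (pow_sub_one_mul_pow_add_two_sub_one_le_sq (by linarith) m)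
  rw [log_mul hpos.ne' hpos₂.ne', log_pow] at this
  exact_mod_cast this

lemma add_two_mul_log_pow_sub_one_le :
    (m + 2) * log (x ^ m - 1) ≤ m * log (x ^ (m + 2) - 1) := by
  have hpos := pow_sub_one_pos hx hm
  have hpos₂ : 0 < x ^ (m + 2) - 1 := pow_sub_one_pos hx (by omega)
  have hlow : 2 * log x + log (x ^ m - 1) ≤ log (x ^ (m + 2) - 1) := by
    have := log_le_log (by positivity) (show x ^ 2 * (x ^ m - 1) ≤ x ^ (m + 2) - 1 by
      nlinarith [one_lt_pow₀ hx two_ne_zero, pow_add x m 2])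
    rw [log_mul (by positivity) hpos.ne', log_pow] at this
    exact_mod_cast this
  have hup : log (x ^ (m + 2) - 1) ≤ (m + 2) * log x := by
    have := log_le_log hpos₂ (sub_le_self _ zero_le_one)
    rw [log_pow] at this
    exact_mod_cast this
  linear_combination (↑m + 2) * hlow + 2 * hup

lemma pow_sub_one_rpow_mul_le_sq :
    (x ^ m - 1) ^ ((1 : ℝ) / m) * (x ^ (m + 2) - 1) ^ ((1 : ℝ) / (m + 2)) ≤
      ((x ^ (m + 1) - 1) ^ ((1 : ℝ) / (m + 1))) ^ 2 := by
  have hpos := pow_sub_one_pos hx hm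
  have hpos₁ : 0 < x ^ (m + 1) - 1 := pow_sub_one_pos hx (by omega)
  have hpos₂ : 0 < x ^ (m + 2) - 1 := pow_sub_one_pos hx (by omega)
  rw [← log_le_log_iff (by positivity) (by positivity), log_mul (by positivity) (by positivity),
    log_pow, log_rpow hpos, log_rpow hpos₁, log_rpow hpos₂]
  simp only [one_div_mul_eq_div, Nat.cast_ofNat]
  exact div_add_div_le_two_mul_div_of_concave (by positivity)
    (log_pow_sub_one_add_log_pow_add_two_sub_one_le hx hm) (add_two_mul_log_pow_sub_one_le hx hm)

end LogPowSubOne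

theorem pow4_sub_one_root_log_concave (n : ℕ) (hn : 2 ≤ n) :
    ((((4 : ℝ) ^ n - 1) ^ ((1 : ℝ) / n)) ^ 2) ≥
      (((4 : ℝ) ^ (n - 1) - 1) ^ ((1 : ℝ) / (n - 1 : ℕ))) *
      (((4 : ℝ) ^ (n + 1) - 1) ^ ((1 : ℝ) / (n + 1))) := by
  obtain ⟨m, rfl⟩ : ∃ m, n = m + 1 := ⟨n - 1, by omega⟩
  have h := pow_sub_one_rpow_mul_le_sq (x := 4) (by norm_num) (m := m) (by omega)
  rw [Nat.add_sub_cancel, ge_iff_le]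
  push_cast
  simpa only [add_assoc, one_add_one_eq_two] using h
end

section
/- The sequence {C(2n, n)^{1/n}}_{n≥1} of n-th roots of central binomial coefficients is strictly log-concave. -/
/-
With `L n = log C(2n, n)` the claim is strict concavity of `L n / n`. From
`(n + 1) C(2n+2, n+1) = 2 (2n + 1) C(2n, n)` we get `L (n + 1) = L n + log 4 - δ n` with
`δ x = log ((2x + 2) / (2x + 1))`, and the second difference of `L n / n` at `k` becomes
`(2k log 4 - 2 L k - k(k+3) δ k + k(k+1) δ (k+1)) / (k(k+1)(k+2))`. The inductive bound
`C(2k, k)^2 (3k + 1) ≤ 16^k` gives `2 L k ≤ 2k log 4 - log (3k + 1)`, and `1 - 1/t ≤ log t ≤ t - 1`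
bounds the `δ`-terms by a rational function of `k` below `7/4`, which stays under `log (3k + 1)`.
-/

open Real
open Nat (centralBinom succ_mul_centralBinom_succ)

theorem centralBinom_sq_mul_le_sixteen_pow (k : ℕ) :
    centralBinom k ^ 2 * (3 * k + 1) ≤ 16 ^ k := by
  induction k with
  | zero => simp
  | succ k ih =>
    refine Nat.le_of_mul_le_mul_left ?_ (by positivity : 0 < (k + 1) ^ 2)
    calc (k + 1) ^ 2 * (centralBinom (k + 1) ^ 2 * (3 * (k + 1) + 1))
        = ((k + 1) * centralBinom (k + 1)) ^ 2 * (3 * k + 4) := by ring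
      _ = (2 * (2 * k + 1)) ^ 2 * (3 * k + 4) * centralBinom k ^ 2 := by
        rw [succ_mul_centralBinom_succ]; ring
      _ ≤ 16 * (k + 1) ^ 2 * (centralBinom k ^ 2 * (3 * k + 1)) := by
        nlinarith [Nat.zero_le (centralBinom k ^ 2)]
      _ ≤ 16 * (k + 1) ^ 2 * 16 ^ k := by gcongr
      _ = (k + 1) ^ 2 * 16 ^ (k + 1) := by ring

theorem two_mul_log_centralBinom_add_log_le (k : ℕ) :
    2 * log (centralBinom k) + log (3 * k + 1) ≤ 2 * k * log 4 := by
  have h : (centralBinom k : ℝ) ^ 2 * (3 * k + 1) ≤ 4 ^ (2 * k) := by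
    rw [pow_mul]; exact_mod_cast centralBinom_sq_mul_le_sixteen_pow k
  have hC : (0 : ℝ) < centralBinom k := by exact_mod_cast Nat.centralBinom_pos k
  have hlog := log_le_log (by positivity) h
  rw [log_mul (by positivity) (by positivity), log_pow, log_pow] at hlog
  exact_mod_cast hlog

noncomputable def centralBinomDeficit (x : ℝ) : ℝ := log ((2 * x + 2) / (2 * x + 1))

theorem log_centralBinom_succ (n : ℕ) :
    log (centralBinom (n + 1)) = log (centralBinom n) + log 4 - centralBinomDeficit n := by
  have hC : (0 : ℝ) < centralBinom n := by exact_mod_cast Nat.centralBinom_pos n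
  have h : (centralBinom (n + 1) : ℝ) = centralBinom n * 4 / ((2 * n + 2) / (2 * n + 1)) := by
    have := congrArg (Nat.cast : ℕ → ℝ) (succ_mul_centralBinom_succ n)
    push_cast at this
    field_simp
    linear_combination 2 * this
  rw [h, centralBinomDeficit, log_div (by positivity) (by positivity), log_mul hC.ne' four_ne_zero]

theorem sub_div_lt_log_three_mul_add_one (x : ℝ) (hx : 1 ≤ x) :
    x * (x + 3) / (2 * x + 1) - x * (x + 1) / (2 * x + 4) < log (3 * x + 1) := by
  rw [div_sub_div _ _ (by positivity) (by positivity)]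
  have hlog2 := log_two_gt_d9
  rcases le_or_gt x (7 / 3) with hx' | hx'
  · calc _ ≤ (13 / 10 : ℝ) := by
          rw [div_le_iff₀ (by positivity)]; nlinarith [mul_nonneg (sub_nonneg.2 hx) (sub_nonneg.2 hx')]
      _ < log ((2 : ℝ) ^ 2) := by rw [log_pow]; norm_num at hlog2 ⊢; linarith
      _ ≤ log (3 * x + 1) := log_le_log (by norm_num) (by linarith)
  · calc _ < (7 / 4 : ℝ) := by rw [div_lt_iff₀ (by positivity)]; nlinarith
      _ < log ((2 : ℝ) ^ 3) := by rw [log_pow]; norm_num at hlog2 ⊢; linarith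
      _ ≤ log (3 * x + 1) := log_le_log (by norm_num) (by linarith)

theorem mul_centralBinomDeficit_sub_lt_log (x : ℝ) (hx : 1 ≤ x) :
    x * (x + 3) * centralBinomDeficit x - x * (x + 1) * centralBinomDeficit (x + 1)
      < log (3 * x + 1) := by
  have upper : centralBinomDeficit x ≤ 1 / (2 * x + 1) := by
    have := log_le_sub_one_of_pos (x := (2 * x + 2) / (2 * x + 1)) (by positivity)
    rw [centralBinomDeficit]
    convert this using 1
    field_simp; ring
  have lower : 1 / (2 * x + 4) ≤ centralBinomDeficit (x + 1) := by
    have := one_sub_inv_le_log_of_pos (x := (2 * x + 4) / (2 * x + 3)) (by positivity)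
    rw [centralBinomDeficit]
    convert this using 2
    · field_simp; ring
    · ring
  calc _ ≤ x * (x + 3) * (1 / (2 * x + 1)) - x * (x + 1) * (1 / (2 * x + 4)) := by
        gcongr
    _ = x * (x + 3) / (2 * x + 1) - x * (x + 1) / (2 * x + 4) := by ring
    _ < log (3 * x + 1) := sub_div_lt_log_three_mul_add_one x hx

theorem log_centralBinom_div_add_lt (k : ℕ) (hk : 1 ≤ k) :
    log (centralBinom k) / k + log (centralBinom (k + 2)) / (k + 2)
      < 2 * (log (centralBinom (k + 1)) / (k + 1)) := by
  have hx : (1 : ℝ) ≤ k := by exact_mod_cast hk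
  have step₁ := log_centralBinom_succ k
  have step₂ := log_centralBinom_succ (k + 1)
  have bound := two_mul_log_centralBinom_add_log_le k
  have key := mul_centralBinomDeficit_sub_lt_log k hx
  push_cast at step₂
  rw [← sub_pos]
  have second_difference : 2 * (log (centralBinom (k + 1)) / (k + 1))
      - (log (centralBinom k) / k + log (centralBinom (k + 2)) / (k + 2))
      = (2 * k * log 4 - 2 * log (centralBinom k) - k * (k + 3) * centralBinomDeficit k
          + k * (k + 1) * centralBinomDeficit (k + 1)) / (k * (k + 1) * (k + 2)) := by
    rw [step₂, step₁]
    field_simp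
    ring
  rw [second_difference]
  exact div_pos (by linarith) (by positivity)

theorem central_binom_root_strict_log_concave (n : ℕ) (hn : 2 ≤ n) :
    (((Nat.choose (2 * n) n : ℝ)) ^ ((1 : ℝ) / n)) ^ 2 >
      ((Nat.choose (2 * (n - 1)) (n - 1) : ℝ)) ^ ((1 : ℝ) / (n - 1 : ℕ)) *
      ((Nat.choose (2 * (n + 1)) (n + 1) : ℝ)) ^ ((1 : ℝ) / (n + 1)) := by
  obtain ⟨k, rfl⟩ : ∃ k, n = k + 1 := ⟨n - 1, by omega⟩
  have hC (m : ℕ) : (0 : ℝ) < centralBinom m := by exact_mod_cast Nat.centralBinom_pos m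
  have hroot (m : ℕ) (p : ℝ) : (0 : ℝ) < centralBinom m ^ p := rpow_pos_of_pos (hC m) p
  simp only [Nat.add_sub_cancel, ← Nat.centralBinom_eq_two_mul_choose]
  rw [gt_iff_lt, ← log_lt_log_iff (mul_pos (hroot _ _) (hroot _ _)) (pow_pos (hroot _ _) 2),
    log_mul (hroot _ _).ne' (hroot _ _).ne', log_pow, log_rpow (hC _), log_rpow (hC _),
    log_rpow (hC _)]
  have concave := log_centralBinom_div_add_lt k (by omega)
  rw [show k + 1 + 1 = k + 2 from rfl]
  push_cast
  rw [add_assoc, one_add_one_eq_two]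
  simpa only [one_div_mul_eq_div] using concave
end

section
/- The sequence of n-th roots of the Catalan numbers, {(C(2n,n)/(n+1))^{1/n}}_{n≥1}, is strictly log-concave. -/
/-!
Put `d k = log (C (k+1) / C k) = log (2 (2k+1) / (k+2))`. Then `log C n = d 0 + ⋯ + d (n-1)`, so
`log (C n ^ (1/n))` is the running mean `a n` of `d`, and the claim is `a (n-1) + a (n+1) < 2 a n`.
Running means of any sequence with strictly decreasing increments are strictly concave:
`2 a (n+1) - a n - a (n+2)` is a positive multiple of `2 ∑_{k<n} (d n - d k) - n (n+1) (d (n+1) - d n)`,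
which is positive because each `d n - d k` is a sum of `n - k` increments larger than `d (n+1) - d n`.
For the Catalan ratios, the decrease of the increments is the polynomial inequality
`(2k+1)(2k+5)(k+3)² < (2k+3)²(k+2)(k+4)`.
-/

open Finset Real

section RunningMean

variable (d : ℕ → ℝ)

noncomputable def runningMean (n : ℕ) : ℝ := (∑ k ∈ range n, d k) / n

variable {d}

theorem increment_mul_lt_sum_sub (hd : StrictAnti fun k => d (k + 1) - d k) {n : ℕ} (hn : 0 < n) :
    n * (n + 1) * (d (n + 1) - d n) < 2 * ∑ k ∈ range n, (d n - d k) := by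
  induction n, hn using Nat.le_induction with
  | base =>
    have h₀ : d 2 - d 1 < d 1 - d 0 := hd Nat.zero_lt_one
    norm_num
    linarith
  | succ n _ ih =>
    have hstep : ∑ k ∈ range (n + 1), (d (n + 1) - d k)
        = ∑ k ∈ range n, (d n - d k) + (n + 1) * (d (n + 1) - d n) := by
      simp only [sum_range_succ, sum_sub_distrib, sum_const, card_range, nsmul_eq_mul]
      push_cast
      ring
    have h₁ : d (n + 2) - d (n + 1) < d (n + 1) - d n := hd n.lt_succ_self
    have h₂ : (n : ℝ) * (n + 1) * (d (n + 2) - d (n + 1)) < n * (n + 1) * (d (n + 1) - d n) :=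
      mul_lt_mul_of_pos_left h₁ (by positivity)
    rw [hstep]
    push_cast
    nlinarith

theorem runningMean_add_runningMean_lt (hd : StrictAnti fun k => d (k + 1) - d k) {n : ℕ}
    (hn : 0 < n) :
    runningMean d n + runningMean d (n + 2) < 2 * runningMean d (n + 1) := by
  have key := increment_mul_lt_sum_sub hd hn
  have hdiff : 2 * runningMean d (n + 1) - (runningMean d n + runningMean d (n + 2))
      = (2 * ∑ k ∈ range n, (d n - d k) - n * (n + 1) * (d (n + 1) - d n))
        / (n * (n + 1) * (n + 2)) := by
    simp only [runningMean, sum_range_succ, sum_sub_distrib, sum_const, card_range, nsmul_eq_mul]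
    push_cast
    field_simp
    ring
  linarith [hdiff ▸ div_pos (sub_pos.mpr key) (by positivity : (0 : ℝ) < n * (n + 1) * (n + 2))]

end RunningMean

theorem succ_succ_mul_catalan_succ (n : ℕ) :
    (n + 2) * catalan (n + 1) = 2 * (2 * n + 1) * catalan n := by
  have h := Nat.succ_mul_centralBinom_succ n
  rw [← succ_mul_catalan_eq_centralBinom, ← succ_mul_catalan_eq_centralBinom] at h
  exact Nat.eq_of_mul_eq_mul_left n.succ_pos (by linarith)

noncomputable def catalanRatio (k : ℕ) : ℝ := 2 * (2 * k + 1) / (k + 2)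

theorem catalanRatio_pos (k : ℕ) : 0 < catalanRatio k := by
  unfold catalanRatio
  positivity

theorem catalan_eq_prod_catalanRatio (n : ℕ) :
    (catalan n : ℝ) = ∏ k ∈ range n, catalanRatio k := by
  induction n with
  | zero => simp
  | succ n ih =>
    have h : ((n : ℝ) + 2) * catalan (n + 1) = 2 * (2 * n + 1) * catalan n := by
      exact_mod_cast succ_succ_mul_catalan_succ n
    rw [prod_range_succ, ← ih, catalanRatio]
    field_simp
    linarith

theorem catalanRatio_mul_lt_sq (k : ℕ) :
    catalanRatio k * catalanRatio (k + 2) < catalanRatio (k + 1) ^ 2 := by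
  simp only [catalanRatio]
  push_cast
  rw [div_mul_div_comm, div_pow, div_lt_div_iff₀ (by positivity) (by positivity)]
  nlinarith [sq_nonneg (k : ℝ)]

theorem strictAnti_log_catalanRatio_increment :
    StrictAnti fun k => log (catalanRatio (k + 1)) - log (catalanRatio k) := by
  refine strictAnti_nat_of_succ_lt fun k => ?_
  have h := log_lt_log (mul_pos (catalanRatio_pos k) (catalanRatio_pos (k + 2)))
    (catalanRatio_mul_lt_sq k)
  rw [log_mul (catalanRatio_pos k).ne' (catalanRatio_pos (k + 2)).ne', log_pow] at h
  push_cast at h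
  linarith

theorem catalan_rpow_one_div (n : ℕ) :
    (catalan n : ℝ) ^ ((1 : ℝ) / n) = exp (runningMean (fun k => log (catalanRatio k)) n) := by
  rw [catalan_eq_prod_catalanRatio, rpow_def_of_pos (prod_pos fun k _ => catalanRatio_pos k),
    log_prod fun k _ => (catalanRatio_pos k).ne', runningMean, mul_one_div]

theorem catalan_root_strict_log_concave (n : ℕ) (hn : 2 ≤ n) :
    (((catalan n : ℝ)) ^ ((1 : ℝ) / n)) ^ 2 >
      ((catalan (n - 1) : ℝ)) ^ ((1 : ℝ) / (n - 1 : ℕ)) *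
      ((catalan (n + 1) : ℝ)) ^ ((1 : ℝ) / (n + 1)) := by
  have h := runningMean_add_runningMean_lt (d := fun k => log (catalanRatio k))
    strictAnti_log_catalanRatio_increment (show 0 < n - 1 by omega)
  rw [show n - 1 + 1 = n by omega, show n - 1 + 2 = n + 1 by omega] at h
  rw [← Nat.cast_add_one, catalan_rpow_one_div, catalan_rpow_one_div, catalan_rpow_one_div, sq,
    ← exp_add, ← exp_add]
  exact exp_lt_exp.mpr (by linarith)
end

section
/- Let p, q > 0 with 1/p + 1/q ≤ 1. Then for all t > 0 and all u with -1 ≤ u ≤ 0, h(t,u) := 1/(1 - e^{-t}) - e^{-tp(u+1)}/(1 - e^{-pt}) - e^{uqt}/(1 - e^{-qt}) > 0. -/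
/-!
Write `g s = (exp s - 1)⁻¹`, so that `1 / (1 - exp (-s)) = 1 + g s`. Convexity of `exp` bounds
the two subtracted terms by `g (p t) - u` and `g (q t) + 1 + u`, which removes `u` altogether, and
strict convexity of `exp` gives `g (p t) < g t / p` for `p > 1`. Hence the expression is at least
`g t - g (p t) - g (q t) > (1 - 1/p - 1/q) g t ≥ 0`.
-/

open Real

theorem one_lt_of_one_div_add_one_div_le_one {p q : ℝ} (hp : 0 < p) (hq : 0 < q)
    (hpq : 1 / p + 1 / q ≤ 1) : 1 < p :=
  (div_lt_one hp).1 (by linarith [one_div_pos.2 hq])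

namespace Real

theorem exp_mul_le_one_sub_add_mul_exp {θ x : ℝ} (hθ₀ : 0 ≤ θ) (hθ₁ : θ ≤ 1) :
    exp (θ * x) ≤ 1 - θ + θ * exp x := by
  have h := convexOn_exp.2 (Set.mem_univ 0) (Set.mem_univ x) (sub_nonneg.2 hθ₁) hθ₀
    (sub_add_cancel 1 θ)
  simpa only [smul_eq_mul, mul_zero, zero_add, exp_zero, mul_one] using h

theorem mul_exp_sub_one_lt_exp_mul_sub_one {p t : ℝ} (hp : 1 < p) (ht : 0 < t) :
    p * (exp t - 1) < exp (p * t) - 1 := by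
  have hp₀ : 0 < p := one_pos.trans hp
  -- `t` is the convex combination `(1 - 1/p) • 0 + (1/p) • (p t)`.
  have h := strictConvexOn_exp.2 (Set.mem_univ 0) (Set.mem_univ (p * t))
    (mul_pos hp₀ ht).ne (sub_pos.2 (inv_lt_one_of_one_lt₀ hp))
    (inv_pos.2 hp₀) (sub_add_cancel 1 p⁻¹)
  simp only [smul_eq_mul, mul_zero, zero_add, exp_zero, mul_one, inv_mul_cancel_left₀ hp₀.ne'] at h
  have := mul_lt_mul_of_pos_left h hp₀
  rw [mul_add, mul_sub, mul_one, mul_inv_cancel₀ hp₀.ne', mul_inv_cancel_left₀ hp₀.ne'] at this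
  linarith

theorem inv_exp_mul_sub_one_lt {p t : ℝ} (hp : 1 < p) (ht : 0 < t) :
    (exp (p * t) - 1)⁻¹ < p⁻¹ * (exp t - 1)⁻¹ := by
  rw [← mul_inv]
  exact inv_strictAnti₀ (mul_pos (one_pos.trans hp) (sub_pos.2 (one_lt_exp_iff.2 ht)))
    (mul_exp_sub_one_lt_exp_mul_sub_one hp ht)

theorem inv_exp_mul_sub_one_add_inv_exp_mul_sub_one_lt {p q t : ℝ} (hp : 0 < p) (hq : 0 < q)
    (hpq : 1 / p + 1 / q ≤ 1) (ht : 0 < t) :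
    (exp (p * t) - 1)⁻¹ + (exp (q * t) - 1)⁻¹ < (exp t - 1)⁻¹ := by
  have hp₁ : 1 < p := one_lt_of_one_div_add_one_div_le_one hp hq hpq
  have hq₁ : 1 < q := one_lt_of_one_div_add_one_div_le_one hq hp (by rwa [add_comm])
  have hg : 0 < (exp t - 1)⁻¹ := inv_pos.2 (sub_pos.2 (one_lt_exp_iff.2 ht))
  rw [one_div, one_div] at hpq
  calc (exp (p * t) - 1)⁻¹ + (exp (q * t) - 1)⁻¹
      < p⁻¹ * (exp t - 1)⁻¹ + q⁻¹ * (exp t - 1)⁻¹ :=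
        add_lt_add (inv_exp_mul_sub_one_lt hp₁ ht) (inv_exp_mul_sub_one_lt hq₁ ht)
    _ = (p⁻¹ + q⁻¹) * (exp t - 1)⁻¹ := (add_mul _ _ _).symm
    _ ≤ (exp t - 1)⁻¹ := mul_le_of_le_one_left hg.le hpq

theorem one_div_one_sub_exp_neg {s : ℝ} (hs : s ≠ 0) :
    1 / (1 - exp (-s)) = 1 + (exp s - 1)⁻¹ := by
  have : exp s - 1 ≠ 0 := sub_ne_zero.2 (mt (exp_eq_one_iff s).1 hs)
  rw [exp_neg]
  field_simp
  ring

theorem exp_neg_mul_div_one_sub_exp_neg_le {θ s : ℝ} (hθ₀ : 0 ≤ θ) (hθ₁ : θ ≤ 1) (hs : 0 < s) :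
    exp (-(θ * s)) / (1 - exp (-s)) ≤ 1 - θ + (exp s - 1)⁻¹ := by
  have hden : 0 < 1 - exp (-s) := sub_pos.2 (exp_lt_one_iff.2 (neg_lt_zero.2 hs))
  have hsplit : 1 - θ + (exp s - 1)⁻¹ = (1 - θ + θ * exp (-s)) / (1 - exp (-s)) := by
    have : exp s - 1 ≠ 0 := sub_ne_zero.2 (mt (exp_eq_one_iff s).1 hs.ne')
    rw [exp_neg]
    field_simp
    ring
  rw [hsplit, ← mul_neg]
  exact div_le_div_of_nonneg_right (exp_mul_le_one_sub_add_mul_exp hθ₀ hθ₁) hden.le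

end Real

theorem h_positive (p q : ℝ) (hp : 0 < p) (hq : 0 < q) (hpq : 1 / p + 1 / q ≤ 1)
    (t : ℝ) (ht : 0 < t) (u : ℝ) (hu1 : -1 ≤ u) (hu2 : u ≤ 0) :
    0 < 1 / (1 - Real.exp (-t)) - Real.exp (-t * p * (u + 1)) / (1 - Real.exp (-(p * t)))
        - Real.exp (u * q * t) / (1 - Real.exp (-(q * t))) := by
  have hp_term : exp (-t * p * (u + 1)) / (1 - exp (-(p * t))) ≤ -u + (exp (p * t) - 1)⁻¹ := by
    rw [show -t * p * (u + 1) = -((u + 1) * (p * t)) by ring]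
    linarith [exp_neg_mul_div_one_sub_exp_neg_le (by linarith : 0 ≤ u + 1) (by linarith)
      (mul_pos hp ht)]
  have hq_term : exp (u * q * t) / (1 - exp (-(q * t))) ≤ 1 + u + (exp (q * t) - 1)⁻¹ := by
    rw [show u * q * t = -(-u * (q * t)) by ring]
    linarith [exp_neg_mul_div_one_sub_exp_neg_le (by linarith : 0 ≤ -u) (by linarith)
      (mul_pos hq ht)]
  rw [one_div_one_sub_exp_neg ht.ne']
  linarith [inv_exp_mul_sub_one_add_inv_exp_mul_sub_one_lt hp hq hpq ht]
end

section
/- Let 0 ≤ a₁ ≤ ... ≤ a_n, 0 ≤ b₁ ≤ ... ≤ b_n, and ρ > 0 with ρ ∏_{i=1}^n Γ(a_i)/Γ(b_i) ≥ 1 and ∑_{i=1}^k a_i ≥ ∑_{i=1}^k b_i for each k = 1, ..., n. Then the function χ(x) = (ρ ∏_{i=1}^n Γ(x+a_i)/Γ(x+b_i))^{1/x} is logarithmically completely monotonic on (0, ∞), i.e., (-1)^k (log χ)^{(k)}(x) ≥ 0 for all x > 0 and k ≥ 1. -/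
/-!
Write `log χ x = h x / x` with `h x = log ρ + ∑ i, (log Γ (x + aᵢ) - log Γ (x + bᵢ))`. The
hypothesis `ρ ∏ Γ(aᵢ)/Γ(bᵢ) ≥ 1` forces `aᵢ, bᵢ > 0`, so `h` is smooth on a neighbourhood of
`[0, ∞)`. By induction on `k`, `(h / x)⁽ᵏ⁾ = (-1)ᵏ k! x⁻ᵏ⁻¹ Tₖ(x)`, where
`Tₖ(x) = ∑_{j ≤ k} h⁽ʲ⁾(x) (-x)ʲ / j!` is the Taylor polynomial of `h` at `x` evaluated at `0`.
Its derivative telescopes to `h⁽ᵏ⁺¹⁾(x) (-x)ᵏ / k!`, so `Tₖ(x) ≥ Tₖ(0) = h 0 ≥ 0` as soon as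
`(-1)ᵏ h⁽ᵏ⁺¹⁾ ≥ 0` on `(0, x)`.

That sign condition is Alzer's theorem. For `k ≥ 1`,
`h⁽ᵏ⁺¹⁾(x) = (-1)ᵏ⁻¹ k! ∑ⱼ ∑ᵢ ((x + j + aᵢ)⁻ᵏ⁻¹ - (x + j + bᵢ)⁻ᵏ⁻¹)`, and for each `j` the inner
sum is `≤ 0`: bound each term by the tangent line of the convex decreasing `t ↦ t⁻ᵏ⁻¹` at
`x + j + aᵢ`, then sum by parts against the nonnegative partial sums of `aᵢ - bᵢ`. The series for
`ψ' = (log Γ)''` comes from `ψ x = lim (log N - ∑_{j<N} 1/(x+j))`, which follows from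
`ψ (x + 1) = ψ x + 1/x` and the convexity bounds `log (x - 1) ≤ ψ x ≤ log x`.
-/

open Finset Filter Topology
open scoped Nat

def HasDerivTowerOn (F : ℕ → ℝ → ℝ) (s : Set ℝ) : Prop :=
  ∀ m, ∀ x ∈ s, HasDerivAt (F m) (F (m + 1) x) x

noncomputable def taylorEvalZero (F : ℕ → ℝ → ℝ) (k : ℕ) (x : ℝ) : ℝ :=
  ∑ j ∈ range (k + 1), F j x * (-x) ^ j / j !

namespace HasDerivTowerOn

variable {F : ℕ → ℝ → ℝ} {s : Set ℝ}

theorem iteratedDeriv_eq (hF : HasDerivTowerOn F s) (hs : IsOpen s) (m : ℕ) {x : ℝ}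
    (hx : x ∈ s) : iteratedDeriv m (F 0) x = F m x := by
  induction m generalizing x with
  | zero => simp
  | succ m ih =>
    have h : iteratedDeriv m (F 0) =ᶠ[𝓝 x] F m :=
      eventually_of_mem (hs.mem_nhds hx) fun y hy => ih hy
    rw [iteratedDeriv_succ, h.deriv_eq]
    exact (hF m x hx).deriv

theorem hasDerivAt_taylorEvalZero (hF : HasDerivTowerOn F s) (k : ℕ) {x : ℝ} (hx : x ∈ s) :
    HasDerivAt (taylorEvalZero F k) (F (k + 1) x * (-x) ^ k / k !) x := by
  induction k with
  | zero =>
    have h : taylorEvalZero F 0 = F 0 := by ext y; simp [taylorEvalZero]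
    simpa [h] using hF 0 x hx
  | succ k ih =>
    have hsucc : taylorEvalZero F (k + 1) =
        fun y => taylorEvalZero F k y + F (k + 1) y * (-y) ^ (k + 1) / (k + 1)! := by
      ext y; simp only [taylorEvalZero, sum_range_succ _ (k + 1)]
    rw [hsucc]
    refine (ih.add (((hF (k + 1) x hx).mul ((hasDerivAt_neg x).fun_pow (k + 1))).div_const
      ((k + 1)! : ℝ))).congr_deriv ?_
    rw [Nat.factorial_succ, add_tsub_cancel_right]
    push_cast
    field_simp
    ring

theorem div_id (hF : HasDerivTowerOn F s) :
    HasDerivTowerOn (fun k x => (-1) ^ k * k ! * taylorEvalZero F k x / x ^ (k + 1))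
      (s ∩ {0}ᶜ) := by
  rintro k x ⟨hxs, hx0⟩
  have hx0 : x ≠ 0 := hx0
  refine (((hF.hasDerivAt_taylorEvalZero k hxs).const_mul ((-1) ^ k * k ! : ℝ)).div
    (hasDerivAt_pow (k + 1) x) (pow_ne_zero _ hx0)).congr_deriv ?_
  simp only [taylorEvalZero, sum_range_succ _ (k + 1), Nat.factorial_succ, add_tsub_cancel_right]
  push_cast
  field_simp
  ring

theorem le_taylorEvalZero (hF : HasDerivTowerOn F s) {k : ℕ} {x : ℝ} (hx : 0 ≤ x)
    (hxs : Set.Icc 0 x ⊆ s) (hsign : ∀ t ∈ Set.Ioo 0 x, 0 ≤ (-1) ^ k * F (k + 1) t) :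
    F 0 0 ≤ taylorEvalZero F k x := by
  have hmono : MonotoneOn (taylorEvalZero F k) (Set.Icc 0 x) := by
    refine monotoneOn_of_hasDerivWithinAt_nonneg (convex_Icc 0 x)
      (fun t ht => (hF.hasDerivAt_taylorEvalZero k (hxs ht)).continuousAt.continuousWithinAt)
      (fun t ht => (hF.hasDerivAt_taylorEvalZero k (hxs (interior_subset ht))).hasDerivWithinAt)
      fun t ht => ?_
    rw [interior_Icc] at ht
    rw [neg_pow, mul_left_comm, ← mul_assoc]
    have hsign_t := hsign t ht
    have ht0 := ht.1.le
    positivity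
  have h0 : taylorEvalZero F k 0 = F 0 0 := by
    simp [taylorEvalZero, sum_range_succ']
  rw [← h0]
  exact hmono ⟨le_rfl, hx⟩ ⟨hx, le_rfl⟩ hx

theorem neg_one_pow_mul_iteratedDeriv_div_nonneg (hF : HasDerivTowerOn F s) (hs : IsOpen s)
    {k : ℕ} {x : ℝ} (hx : 0 < x) (hxs : Set.Icc 0 x ⊆ s) (h0 : 0 ≤ F 0 0)
    (hsign : ∀ t ∈ Set.Ioo 0 x, 0 ≤ (-1) ^ k * F (k + 1) t) :
    0 ≤ (-1) ^ k * iteratedDeriv k (fun y => F 0 y / y) x := by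
  have hG0 : (fun y => F 0 y / y) =
      fun y => (-1) ^ 0 * (0 ! : ℝ) * taylorEvalZero F 0 y / y ^ 1 := by
    ext y; simp [taylorEvalZero]
  rw [hG0, hF.div_id.iteratedDeriv_eq (hs.inter isOpen_compl_singleton) k
    ⟨hxs ⟨hx.le, le_rfl⟩, hx.ne'⟩]
  have hT := hF.le_taylorEvalZero hx.le hxs hsign
  have hT0 : 0 ≤ taylorEvalZero F k x := h0.trans hT
  have hsq : (-1 : ℝ) ^ k * (-1) ^ k = 1 := by rw [← mul_pow]; norm_num
  calc (0 : ℝ) ≤ k ! * taylorEvalZero F k x / x ^ (k + 1) := by positivity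
    _ = _ := by linear_combination (-(k ! * taylorEvalZero F k x / x ^ (k + 1))) * hsq

end HasDerivTowerOn

theorem ConvexOn.add_deriv_mul_sub_le {s : Set ℝ} {f : ℝ → ℝ} {f' x y : ℝ}
    (hf : ConvexOn ℝ s f) (hx : x ∈ s) (hy : y ∈ s) (hfx : HasDerivAt f f' x) :
    f x + f' * (y - x) ≤ f y := by
  rcases lt_trichotomy x y with h | rfl | h
  · have := hf.le_slope_of_hasDerivAt hx hy h hfx
    rw [slope_def_field, le_div_iff₀ (sub_pos.2 h)] at this
    linarith
  · simp
  · have := hf.slope_le_of_hasDerivAt hy hx h hfx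
    rw [slope_def_field, div_le_iff₀ (sub_pos.2 h)] at this
    linarith

theorem mul_sum_Icc_le_sum_Icc_mul {w c : ℕ → ℝ} {n : ℕ} (hw : AntitoneOn w (Set.Icc 1 n))
    (hc : ∀ k ∈ Set.Icc 1 n, 0 ≤ ∑ i ∈ Icc 1 k, c i) :
    w n * ∑ i ∈ Icc 1 n, c i ≤ ∑ i ∈ Icc 1 n, w i * c i := by
  induction n with
  | zero => simp
  | succ n ih =>
    have ih := ih (hw.mono (Set.Icc_subset_Icc_right n.le_succ))
      fun k hk => hc k ⟨hk.1, hk.2.trans n.le_succ⟩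
    have hstep : w (n + 1) * ∑ i ∈ Icc 1 n, c i ≤ w n * ∑ i ∈ Icc 1 n, c i := by
      rcases n.eq_zero_or_pos with rfl | hn
      · simp
      · exact mul_le_mul_of_nonneg_right (hw ⟨hn, by omega⟩ ⟨by omega, le_rfl⟩ (by omega))
          (hc n ⟨hn, n.le_succ⟩)
    rw [sum_Icc_succ_top (by omega), sum_Icc_succ_top (by omega)]
    linarith

theorem sum_Icc_mul_nonneg_of_antitoneOn {w c : ℕ → ℝ} {n : ℕ}
    (hw0 : ∀ i ∈ Icc 1 n, 0 ≤ w i) (hw : AntitoneOn w (Set.Icc 1 n))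
    (hc : ∀ k ∈ Set.Icc 1 n, 0 ≤ ∑ i ∈ Icc 1 k, c i) :
    0 ≤ ∑ i ∈ Icc 1 n, w i * c i := by
  rcases n.eq_zero_or_pos with rfl | hn
  · simp
  · exact (mul_nonneg (hw0 n (Finset.mem_Icc.2 ⟨hn, le_rfl⟩)) (hc n ⟨hn, le_rfl⟩)).trans
      (mul_sum_Icc_le_sum_Icc_mul hw hc)

theorem ConvexOn.sum_Icc_le_sum_Icc_of_sum_le {s : Set ℝ} {f f' : ℝ → ℝ} (hf : ConvexOn ℝ s f)
    (hf' : ∀ x ∈ s, HasDerivAt f (f' x) x) (hf'0 : ∀ x ∈ s, f' x ≤ 0) {n : ℕ} {a b : ℕ → ℝ}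
    (has : ∀ i ∈ Icc 1 n, a i ∈ s) (hbs : ∀ i ∈ Icc 1 n, b i ∈ s)
    (ha : MonotoneOn a (Set.Icc 1 n))
    (hab : ∀ k ∈ Set.Icc 1 n, ∑ i ∈ Icc 1 k, b i ≤ ∑ i ∈ Icc 1 k, a i) :
    ∑ i ∈ Icc 1 n, f (a i) ≤ ∑ i ∈ Icc 1 n, f (b i) := by
  have htangent : ∀ i ∈ Icc 1 n, f (a i) - f (b i) ≤ f' (a i) * (a i - b i) := fun i hi => by
    linarith [hf.add_deriv_mul_sub_le (has i hi) (hbs i hi) (hf' _ (has i hi))]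
  have hmono : MonotoneOn f' s := fun x hx y hy hxy => by
    simpa only [(hf' x hx).deriv, (hf' y hy).deriv] using
      hf.monotoneOn_deriv (fun z hz => (hf' z hz).differentiableAt) hx hy hxy
  have habel : 0 ≤ ∑ i ∈ Icc 1 n, -f' (a i) * (a i - b i) := by
    refine sum_Icc_mul_nonneg_of_antitoneOn (fun i hi => neg_nonneg.2 (hf'0 _ (has i hi)))
      (fun i hi j hj hij => neg_le_neg
        (hmono (has i (Finset.mem_Icc.2 hi)) (has j (Finset.mem_Icc.2 hj)) (ha hi hj hij)))
      fun k hk => ?_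
    rw [sum_sub_distrib, sub_nonneg]
    exact hab k hk
  have := sum_le_sum htangent
  simp only [sum_sub_distrib, neg_mul, sum_neg_distrib] at this habel
  linarith

lemma zpow_neg_natCast_le_of_le {p q : ℝ} (hp : 0 < p) (hpq : p ≤ q) (m : ℕ) :
    q ^ (-(m : ℤ)) ≤ p ^ (-(m : ℤ)) := by
  simpa only [zpow_neg, zpow_natCast] using inv_anti₀ (pow_pos hp m) (pow_le_pow_left₀ hp.le hpq m)

namespace Real

noncomputable def hurwitzSum (m : ℕ) (x : ℝ) : ℝ := ∑' j : ℕ, (x + j) ^ (-(m : ℤ))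

theorem summable_add_nat_zpow_neg {m : ℕ} (hm : 2 ≤ m) {x : ℝ} (hx : 0 < x) :
    Summable fun j : ℕ => (x + j) ^ (-(m : ℤ)) := by
  refine ((summable_one_div_nat_add_rpow x m).mpr (by exact_mod_cast hm)).congr fun j => ?_
  rw [abs_of_pos (by positivity), rpow_natCast, zpow_neg, zpow_natCast, one_div, add_comm]

theorem hasDerivAt_hurwitzSum {m : ℕ} (hm : 2 ≤ m) {x : ℝ} (hx : 0 < x) :
    HasDerivAt (hurwitzSum m) (-m * hurwitzSum (m + 1) x) x := by
  have hpos {y : ℝ} (hy : y ∈ Set.Ioi (x / 2)) (j : ℕ) : 0 < y + j := by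
    have : x / 2 < y := hy; linarith [j.cast_nonneg (α := ℝ), half_pos hx]
  have hderiv (j : ℕ) (y : ℝ) (hy : y ∈ Set.Ioi (x / 2)) :
      HasDerivAt (fun z : ℝ => (z + j) ^ (-(m : ℤ))) (-m * (y + j) ^ (-((m + 1 : ℕ) : ℤ))) y := by
    refine ((hasDerivAt_zpow _ _ (Or.inl (hpos hy j).ne')).comp_add_const y j).congr_deriv ?_
    push_cast
    ring_nf
  have hbound (j : ℕ) (y : ℝ) (hy : y ∈ Set.Ioi (x / 2)) :
      ‖-(m : ℝ) * (y + j) ^ (-((m + 1 : ℕ) : ℤ))‖ ≤ m * (x / 2 + j) ^ (-((m + 1 : ℕ) : ℤ)) := by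
    rw [norm_mul, norm_neg, norm_natCast, norm_of_nonneg (zpow_pos (hpos hy j) _).le]
    have : x / 2 < y := hy
    gcongr
    exact zpow_neg_natCast_le_of_le (by positivity) (by linarith) _
  have h := hasDerivAt_tsum_of_isPreconnected
    ((summable_add_nat_zpow_neg (by omega) (half_pos hx)).mul_left (m : ℝ)) isOpen_Ioi
    isPreconnected_Ioi hderiv hbound (half_lt_self hx) (summable_add_nat_zpow_neg hm hx)
    (half_lt_self hx)
  rw [tsum_mul_left] at h
  exact h

noncomputable def digamma (x : ℝ) : ℝ := deriv (log ∘ Gamma) x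

theorem hasDerivAt_log_Gamma_s19 {x : ℝ} (hx : 0 < x) : HasDerivAt (log ∘ Gamma) (digamma x) x :=
  ((differentiableAt_Gamma fun m => by linarith [m.cast_nonneg (α := ℝ)]).log
    (Gamma_pos_of_pos hx).ne').hasDerivAt

theorem log_Gamma_add_one {x : ℝ} (hx : 0 < x) :
    log (Gamma (x + 1)) = log (Gamma x) + log x := by
  rw [Gamma_add_one hx.ne', log_mul hx.ne' (Gamma_pos_of_pos hx).ne', add_comm]

theorem slope_log_Gamma_add_one {x : ℝ} (hx : 0 < x) :
    slope (log ∘ Gamma) x (x + 1) = log x := by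
  simp [slope_def_field, log_Gamma_add_one hx]

theorem digamma_le_log {x : ℝ} (hx : 0 < x) : digamma x ≤ log x :=
  slope_log_Gamma_add_one hx ▸ convexOn_log_Gamma.le_slope_of_hasDerivAt hx
    (show 0 < x + 1 by linarith) (lt_add_one x) (hasDerivAt_log_Gamma_s19 hx)

theorem log_le_digamma_add_one {x : ℝ} (hx : 0 < x) : log x ≤ digamma (x + 1) :=
  slope_log_Gamma_add_one hx ▸ convexOn_log_Gamma.slope_le_of_hasDerivAt hx
    (show 0 < x + 1 by linarith) (lt_add_one x) (hasDerivAt_log_Gamma_s19 (by linarith))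

theorem digamma_add_one {x : ℝ} (hx : 0 < x) : digamma (x + 1) = digamma x + x⁻¹ := by
  have hshift : (fun y => (log ∘ Gamma) (y + 1)) =ᶠ[𝓝 x] fun y => (log ∘ Gamma) y + log y := by
    filter_upwards [eventually_gt_nhds hx] with y hy
    exact log_Gamma_add_one hy
  exact ((hasDerivAt_log_Gamma_s19 (by linarith)).comp_add_const x 1).unique
    (((hasDerivAt_log_Gamma_s19 hx).add (hasDerivAt_log hx.ne')).congr_of_eventuallyEq hshift)

theorem digamma_add_nat {x : ℝ} (hx : 0 < x) (N : ℕ) :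
    digamma (x + N) = digamma x + ∑ j ∈ range N, (x + j)⁻¹ := by
  induction N with
  | zero => simp
  | succ N ih =>
    rw [Nat.cast_succ, ← add_assoc, digamma_add_one (by positivity), ih, sum_range_succ, add_assoc]

theorem tendsto_digamma_add_nat_sub_log {x : ℝ} (hx : 0 < x) :
    Tendsto (fun N : ℕ => digamma (x + N) - log N) atTop (𝓝 0) := by
  have hlog (c : ℝ) : Tendsto (fun N : ℕ => log (N + c) - log N) atTop (𝓝 0) :=
    (tendsto_log_comp_add_sub_log c).comp tendsto_natCast_atTop_atTop
  refine tendsto_of_tendsto_of_tendsto_of_le_of_le' (hlog (x - 1)) (hlog x) ?_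
    (Eventually.of_forall fun N => ?_)
  · filter_upwards [eventually_ge_atTop 1] with N hN
    have hN : (1 : ℝ) ≤ N := by exact_mod_cast hN
    have h := log_le_digamma_add_one (x := N + (x - 1)) (by linarith)
    rw [show N + (x - 1) + 1 = x + N by ring] at h
    exact sub_le_sub_right h _
  · exact sub_le_sub_right ((digamma_le_log (by positivity)).trans_eq (by rw [add_comm])) _

theorem tendsto_log_sub_sum_inv {x : ℝ} (hx : 0 < x) :
    Tendsto (fun N : ℕ => log N - ∑ j ∈ range N, (x + j)⁻¹) atTop (𝓝 (digamma x)) := by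
  have h := (tendsto_digamma_add_nat_sub_log hx).const_sub (digamma x)
  rw [sub_zero] at h
  refine h.congr fun N => ?_
  rw [digamma_add_nat hx]
  ring

theorem hasDerivAt_digamma {x : ℝ} (hx : 0 < x) : HasDerivAt digamma (hurwitzSum 2 x) x := by
  have hx2 : 0 < x / 2 := half_pos hx
  refine hasDerivAt_of_tendstoUniformlyOn (s := Set.Ioi (x / 2)) isOpen_Ioi
    (f := fun (N : ℕ) (y : ℝ) => log N - ∑ j ∈ range N, (y + j)⁻¹)
    (tendstoUniformlyOn_tsum_nat (summable_add_nat_zpow_neg le_rfl hx2) fun j y hy => ?_)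
    (Eventually.of_forall fun N y hy => ?_)
    (fun y hy => tendsto_log_sub_sum_inv (hx2.trans hy)) (half_lt_self hx)
  · have hy : x / 2 < y := hy
    have hyj : 0 < y + j := by linarith [j.cast_nonneg (α := ℝ)]
    rw [Real.norm_of_nonneg (by positivity)]
    exact zpow_neg_natCast_le_of_le (by positivity) (by linarith) _
  · have hyj (j : ℕ) : y + j ≠ 0 := by have : 0 < y := hx2.trans hy; positivity
    refine ((hasDerivAt_const y _).sub (HasDerivAt.fun_sum fun j _ =>
      ((hasDerivAt_inv (hyj j)).comp_add_const y j))).congr_deriv ?_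
    simp [zpow_neg]

noncomputable def logGammaDeriv : ℕ → ℝ → ℝ
  | 0 => log ∘ Gamma
  | 1 => digamma
  | m + 2 => fun x => (-1) ^ m * (m + 1)! * hurwitzSum (m + 2) x

theorem hasDerivTowerOn_logGammaDeriv : HasDerivTowerOn logGammaDeriv (Set.Ioi 0)
  | 0, _, hx => hasDerivAt_log_Gamma_s19 hx
  | 1, _, hx => hasDerivAt_digamma hx |>.congr_deriv (by simp [logGammaDeriv])
  | m + 2, _, hx => ((hasDerivAt_hurwitzSum (by omega) hx).const_mul _).congr_deriv (by
      simp only [logGammaDeriv, Nat.factorial_succ (m + 1)]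
      push_cast
      ring)

theorem sum_hurwitzSum_le {m n : ℕ} (hm : 2 ≤ m) {x : ℝ} (hx : 0 < x) {a b : ℕ → ℝ}
    (ha0 : ∀ i ∈ Icc 1 n, 0 ≤ a i) (hb0 : ∀ i ∈ Icc 1 n, 0 ≤ b i)
    (ha : MonotoneOn a (Set.Icc 1 n))
    (hab : ∀ k ∈ Set.Icc 1 n, ∑ i ∈ Icc 1 k, b i ≤ ∑ i ∈ Icc 1 k, a i) :
    ∑ i ∈ Icc 1 n, hurwitzSum m (x + a i) ≤ ∑ i ∈ Icc 1 n, hurwitzSum m (x + b i) := by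
  have hterm (j : ℕ) :
      ∑ i ∈ Icc 1 n, (x + a i + j) ^ (-(m : ℤ)) ≤ ∑ i ∈ Icc 1 n, (x + b i + j) ^ (-(m : ℤ)) := by
    have hc : 0 < x + j := by positivity
    simp only [add_right_comm x _ (j : ℝ)]
    refine (convexOn_zpow _).sum_Icc_le_sum_Icc_of_sum_le
      (fun y hy => hasDerivAt_zpow _ y (Or.inl (ne_of_gt hy)))
      (fun y hy => ?_) (fun i hi => ?_) (fun i hi => ?_) (fun i hi j hj hij => ?_) fun k hk => ?_
    · exact mul_nonpos_of_nonpos_of_nonneg (by simp) (zpow_pos hy _).le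
    · have := ha0 i hi; show 0 < x + j + a i; linarith
    · have := hb0 i hi; show 0 < x + j + b i; linarith
    · exact add_le_add_right (ha hi hj hij) _
    · simp only [sum_add_distrib]
      linarith [hab k hk]
  have hsum {c : ℕ → ℝ} (hc : ∀ i ∈ Icc 1 n, 0 ≤ c i) :
      ∑ i ∈ Icc 1 n, hurwitzSum m (x + c i) = ∑' j : ℕ, ∑ i ∈ Icc 1 n, (x + c i + j) ^ (-(m : ℤ)) :=
    (Summable.tsum_finsetSum fun i hi =>
      summable_add_nat_zpow_neg hm (by linarith [hc i hi])).symm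
  rw [hsum ha0, hsum hb0]
  exact Summable.tsum_le_tsum hterm
    (summable_sum fun i hi => summable_add_nat_zpow_neg hm (by linarith [ha0 i hi]))
    (summable_sum fun i hi => summable_add_nat_zpow_neg hm (by linarith [hb0 i hi]))

noncomputable def logGammaRatioDeriv (ρ : ℝ) (I : Finset ℕ) (a b : ℕ → ℝ) (m : ℕ) (x : ℝ) : ℝ :=
  (if m = 0 then log ρ else 0) + ∑ i ∈ I, (logGammaDeriv m (x + a i) - logGammaDeriv m (x + b i))

theorem hasDerivTowerOn_logGammaRatioDeriv (ρ : ℝ) (I : Finset ℕ) (a b : ℕ → ℝ) :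
    HasDerivTowerOn (logGammaRatioDeriv ρ I a b) {x | ∀ i ∈ I, 0 < x + a i ∧ 0 < x + b i} :=
  fun m x hx => by
    refine (HasDerivAt.const_add _ (HasDerivAt.fun_sum fun i hi =>
      ((hasDerivTowerOn_logGammaDeriv m _ (hx i hi).1).comp_add_const x (a i)).sub
        ((hasDerivTowerOn_logGammaDeriv m _ (hx i hi).2).comp_add_const x (b i)))).congr_deriv ?_
    simp [logGammaRatioDeriv]

theorem log_mul_prod_Gamma_div {ρ : ℝ} (hρ : 0 < ρ) {I : Finset ℕ} {a b : ℕ → ℝ} {x : ℝ}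
    (hx : ∀ i ∈ I, 0 < x + a i ∧ 0 < x + b i) :
    log (ρ * ∏ i ∈ I, Gamma (x + a i) / Gamma (x + b i)) = logGammaRatioDeriv ρ I a b 0 x := by
  have hΓ : ∀ i ∈ I, Gamma (x + a i) / Gamma (x + b i) ≠ 0 := fun i hi =>
    (div_pos (Gamma_pos_of_pos (hx i hi).1) (Gamma_pos_of_pos (hx i hi).2)).ne'
  rw [log_mul hρ.ne' (prod_ne_zero_iff.2 hΓ), log_prod hΓ]
  simp only [logGammaRatioDeriv]
  congr 1
  refine sum_congr rfl fun i hi => ?_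
  exact log_div (Gamma_pos_of_pos (hx i hi).1).ne' (Gamma_pos_of_pos (hx i hi).2).ne'

theorem log_rpow_one_div_mul_prod_Gamma_div {ρ : ℝ} (hρ : 0 < ρ) {I : Finset ℕ} {a b : ℕ → ℝ}
    {x : ℝ} (hx : ∀ i ∈ I, 0 < x + a i ∧ 0 < x + b i) :
    log ((ρ * ∏ i ∈ I, Gamma (x + a i) / Gamma (x + b i)) ^ (1 / x)) =
      logGammaRatioDeriv ρ I a b 0 x / x := by
  rw [log_rpow, log_mul_prod_Gamma_div hρ hx, one_div_mul_eq_div]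
  exact mul_pos hρ (prod_pos fun i hi =>
    div_pos (Gamma_pos_of_pos (hx i hi).1) (Gamma_pos_of_pos (hx i hi).2))

theorem isOpen_setOf_forall_add_pos (I : Finset ℕ) (a b : ℕ → ℝ) :
    IsOpen {x : ℝ | ∀ i ∈ I, 0 < x + a i ∧ 0 < x + b i} := by
  simp only [Set.ofPred_forall]
  exact isOpen_biInter_finset fun i _ =>
    (isOpen_lt continuous_const (continuous_add_const _)).inter
      (isOpen_lt continuous_const (continuous_add_const _))

-- `Γ 0 = 0` in Mathlib, so the hypothesis excludes vanishing parameters.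
theorem pos_of_one_le_mul_prod_Gamma_div {ρ : ℝ} {I : Finset ℕ} {a b : ℕ → ℝ}
    (ha0 : ∀ i ∈ I, 0 ≤ a i) (hb0 : ∀ i ∈ I, 0 ≤ b i)
    (h : 1 ≤ ρ * ∏ i ∈ I, Gamma (a i) / Gamma (b i)) (i : ℕ) (hi : i ∈ I) :
    0 < a i ∧ 0 < b i := by
  have hΓ := div_ne_zero_iff.1
    (prod_ne_zero_iff.1 (right_ne_zero_of_mul (one_pos.trans_le h).ne') i hi)
  exact ⟨(ha0 i hi).lt_of_ne fun h => hΓ.1 (by rw [← h, Gamma_zero]),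
    (hb0 i hi).lt_of_ne fun h => hΓ.2 (by rw [← h, Gamma_zero])⟩

theorem neg_one_pow_mul_logGammaRatioDeriv_nonneg (ρ : ℝ) {n k : ℕ} (hk : 1 ≤ k) {x : ℝ}
    (hx : 0 < x) {a b : ℕ → ℝ} (ha0 : ∀ i ∈ Icc 1 n, 0 ≤ a i) (hb0 : ∀ i ∈ Icc 1 n, 0 ≤ b i)
    (ha : MonotoneOn a (Set.Icc 1 n))
    (hab : ∀ k ∈ Set.Icc 1 n, ∑ i ∈ Icc 1 k, b i ≤ ∑ i ∈ Icc 1 k, a i) :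
    0 ≤ (-1) ^ k * logGammaRatioDeriv ρ (Icc 1 n) a b (k + 1) x := by
  obtain ⟨p, rfl⟩ : ∃ p, k = p + 1 := ⟨k - 1, by omega⟩
  have hsum := sum_hurwitzSum_le (m := p + 2) (by omega) hx ha0 hb0 ha hab
  have hsq : (-1 : ℝ) ^ p * (-1) ^ p = 1 := by rw [← mul_pow]; norm_num
  have hexpand : (-1) ^ (p + 1) * logGammaRatioDeriv ρ (Icc 1 n) a b (p + 1 + 1) x =
      (p + 1)! * (∑ i ∈ Icc 1 n, hurwitzSum (p + 2) (x + b i) -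
        ∑ i ∈ Icc 1 n, hurwitzSum (p + 2) (x + a i)) := by
    simp only [logGammaRatioDeriv, logGammaDeriv, Nat.add_one_ne_zero, if_false, zero_add,
      ← mul_sub, ← mul_sum, sum_sub_distrib]
    linear_combination (-(((p + 1)! : ℝ) * (∑ i ∈ Icc 1 n, hurwitzSum (p + 2) (x + a i) -
        ∑ i ∈ Icc 1 n, hurwitzSum (p + 2) (x + b i)))) * hsq
  rw [hexpand]
  exact mul_nonneg (by positivity) (sub_nonneg.2 hsum)

end Real

theorem chi_logarithmically_completely_monotonic_general
    (n : ℕ) (a b : ℕ → ℝ) (ρ : ℝ) (hρ : 0 < ρ)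
    (ha0 : ∀ i ∈ Icc 1 n, 0 ≤ a i) (hb0 : ∀ i ∈ Icc 1 n, 0 ≤ b i)
    (hamono : ∀ i j, 1 ≤ i → i ≤ j → j ≤ n → a i ≤ a j)
    (hρprod : 1 ≤ ρ * ∏ i ∈ Icc 1 n, Real.Gamma (a i) / Real.Gamma (b i))
    (hsum : ∀ k, 1 ≤ k → k ≤ n → ∑ i ∈ Icc 1 k, b i ≤ ∑ i ∈ Icc 1 k, a i) :
    ∀ (k : ℕ), 1 ≤ k → ∀ x : ℝ, 0 < x →
      0 ≤ (-1 : ℝ) ^ k *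
        iteratedDeriv k (fun y : ℝ =>
          Real.log ((ρ * ∏ i ∈ Icc 1 n, Real.Gamma (y + a i) / Real.Gamma (y + b i))
            ^ (1 / y))) x := by
  intro k hk x hx
  have hpos := Real.pos_of_one_le_mul_prod_Gamma_div ha0 hb0 hρprod
  have hIci : Set.Ici 0 ⊆ {y : ℝ | ∀ i ∈ Icc 1 n, 0 < y + a i ∧ 0 < y + b i} :=
    fun y hy i hi => ⟨by linarith [(hpos i hi).1, Set.mem_Ici.1 hy],
      by linarith [(hpos i hi).2, Set.mem_Ici.1 hy]⟩
  have heq : (fun y : ℝ => Real.log ((ρ * ∏ i ∈ Icc 1 n,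
      Real.Gamma (y + a i) / Real.Gamma (y + b i)) ^ (1 / y))) =ᶠ[𝓝 x]
      fun y => Real.logGammaRatioDeriv ρ (Icc 1 n) a b 0 y / y := by
    filter_upwards [eventually_gt_nhds hx] with y hy
    exact Real.log_rpow_one_div_mul_prod_Gamma_div hρ (hIci (Set.mem_Ici.2 hy.le))
  have h0 : 0 ≤ Real.logGammaRatioDeriv ρ (Icc 1 n) a b 0 0 := by
    rw [← Real.log_mul_prod_Gamma_div hρ (hIci (Set.mem_Ici.2 le_rfl))]
    simpa using Real.log_nonneg hρprod
  rw [heq.iteratedDeriv_eq]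
  exact (Real.hasDerivTowerOn_logGammaRatioDeriv ρ _ a b).neg_one_pow_mul_iteratedDeriv_div_nonneg
    (Real.isOpen_setOf_forall_add_pos _ a b) hx (Set.Icc_subset_Ici_self.trans hIci) h0
    fun t ht => Real.neg_one_pow_mul_logGammaRatioDeriv_nonneg ρ hk ht.1 ha0 hb0
      (fun i hi j hj hij => hamono i j hi.1 hij hj.2) fun k hk => hsum k hk.1 hk.2

theorem chi_logarithmically_completely_monotonic
    (n : ℕ) (a b : ℕ → ℝ) (ρ : ℝ) (hρ : 0 < ρ)
    (ha0 : ∀ i ∈ Icc 1 n, 0 ≤ a i) (hb0 : ∀ i ∈ Icc 1 n, 0 ≤ b i)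
    (hamono : ∀ i j, 1 ≤ i → i ≤ j → j ≤ n → a i ≤ a j)
    (hbmono : ∀ i j, 1 ≤ i → i ≤ j → j ≤ n → b i ≤ b j)
    (hρprod : 1 ≤ ρ * ∏ i ∈ Icc 1 n, Real.Gamma (a i) / Real.Gamma (b i))
    (hsum : ∀ k, 1 ≤ k → k ≤ n → ∑ i ∈ Icc 1 k, b i ≤ ∑ i ∈ Icc 1 k, a i) :
    ∀ (k : ℕ), 1 ≤ k → ∀ x : ℝ, 0 < x →
      0 ≤ (-1 : ℝ) ^ k *
        iteratedDeriv k (fun y : ℝ =>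
          Real.log ((ρ * ∏ i ∈ Icc 1 n, Real.Gamma (y + a i) / Real.Gamma (y + b i))
            ^ (1 / y))) x :=
  chi_logarithmically_completely_monotonic_general n a b ρ hρ ha0 hb0 hamono hρprod hsum
end
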